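/- arXiv:2510.06715 — 9 statements merged into one kernel-verified Lean document; each statement's English description precedes it below -/
import Mathlib

section
/- Let ν > 0, let s ∈ ℂ with Re s > 0, and set λ = ν s². Let f : [0,∞) → ℂ be continuous and bounded. Define v(y) = −(1/(2sν)) ∫_y^∞ f(τ) e^{s(y−τ)} dτ − (1/(2sν)) ∫_0^y f(τ) e^{−s(y−τ)} dτ + (1/(2sν)) ∫_0^∞ f(τ) e^{−s(y+τ)} dτ. Then v is twice continuously differentiable on [0,∞), satisfies ν v''(y) − λ v(y) = f(y) for all y ≥ 0, satisfies v(0) = 0, and for all y ≥ 0 one has |v(y)| ≤ (sup_{τ ≥ 0} |f(τ)|) / (ν |s| · Re s). -/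
/-!
Write `v = (C - A - B) / (2sν)` with the tail integral `A(y) = ∫_y^∞ f(τ) e^{s(y-τ)} dτ`, the head
integral `B(y) = ∫_0^y f(τ) e^{-s(y-τ)} dτ` and the image term `C(y) = ∫_0^∞ f(τ) e^{-s(y+τ)} dτ`.
Each is `e^{±sy}` times a primitive, so `A' = sA - f`, `B' = f - sB` and `C' = -sC`. Hence
`v' = (B - A - C) / (2ν)` and `v'' = s² v + f / ν`, which is the equation, while `A(0) = C(0)` and
`B(0) = 0` give `v(0) = 0`. With `M = sup |f|` and `r = Re s`, the kernels give `|A| ≤ M / r`,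
`|B| ≤ M (1 - e^{-ry}) / r` and `|C| ≤ M e^{-ry} / r`, which add up to `2M / r`.
Since `f` is only continuous on `[0, ∞)`, the derivatives are computed for its continuous bounded
extension `y ↦ f (max y 0)`, which defines the same `v` on `[0, ∞)`.
-/

open MeasureTheory Set

theorem hasDerivAt_cexp_mul_ofReal (κ : ℂ) (y : ℝ) :
    HasDerivAt (fun y : ℝ => Complex.exp (κ * y)) (κ * Complex.exp (κ * y)) y := by
  simpa [mul_comm] using ((hasDerivAt_id y).ofReal_comp.const_mul κ).cexp

theorem norm_cexp_mul_ofReal (κ : ℂ) (y : ℝ) : ‖Complex.exp (κ * y)‖ = Real.exp (κ.re * y) := by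
  simp [Complex.norm_exp]

theorem integrableOn_mul_cexp_Ioi {g : ℝ → ℂ} {κ : ℂ} {C : ℝ} (hκ : κ.re < 0)
    (hg : Continuous g) (hC : ∀ τ, ‖g τ‖ ≤ C) (a : ℝ) :
    IntegrableOn (fun τ : ℝ => g τ * Complex.exp (κ * τ)) (Ioi a) :=
  (integrableOn_exp_mul_complex_Ioi hκ a).bdd_mul hg.aestronglyMeasurable.restrict
    (ae_of_all _ hC)

theorem norm_mul_cexp_le {f : ℝ → ℂ} {κ : ℂ} {M τ : ℝ} (hM : ‖f τ‖ ≤ M) :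
    ‖f τ * Complex.exp (κ * τ)‖ ≤ M * Real.exp (κ.re * τ) := by
  rw [norm_mul, norm_cexp_mul_ofReal]
  gcongr

theorem norm_integral_Ioi_mul_cexp_le {f : ℝ → ℂ} {κ : ℂ} {M a : ℝ} (hκ : κ.re < 0)
    (hM : ∀ τ ∈ Ioi a, ‖f τ‖ ≤ M) :
    ‖∫ τ in Ioi a, f τ * Complex.exp (κ * τ)‖ ≤ M * (Real.exp (κ.re * a) / -κ.re) :=
  calc ‖∫ τ in Ioi a, f τ * Complex.exp (κ * τ)‖
      ≤ ∫ τ in Ioi a, M * Real.exp (κ.re * τ) :=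
        norm_integral_le_of_norm_le ((integrableOn_exp_mul_Ioi hκ a).const_mul M)
          (ae_restrict_of_forall_mem measurableSet_Ioi fun τ hτ => norm_mul_cexp_le (hM τ hτ))
    _ = M * (Real.exp (κ.re * a) / -κ.re) := by
        rw [integral_const_mul, integral_exp_mul_Ioi hκ, neg_div, div_neg]

theorem norm_intervalIntegral_mul_cexp_le {f : ℝ → ℂ} {κ : ℂ} {M a b : ℝ} (hκ : κ.re ≠ 0)
    (hab : a ≤ b) (hM : ∀ τ ∈ Ioc a b, ‖f τ‖ ≤ M) :
    ‖∫ τ in a..b, f τ * Complex.exp (κ * τ)‖ ≤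
      M * ((Real.exp (κ.re * b) - Real.exp (κ.re * a)) / κ.re) :=
  calc ‖∫ τ in a..b, f τ * Complex.exp (κ * τ)‖
      ≤ ∫ τ in a..b, M * Real.exp (κ.re * τ) :=
        intervalIntegral.norm_integral_le_of_norm_le hab
          (ae_of_all _ fun τ hτ => norm_mul_cexp_le (hM τ hτ))
          ((by fun_prop : Continuous fun τ => M * Real.exp (κ.re * τ)).intervalIntegrable _ _)
    _ = M * ((Real.exp (κ.re * b) - Real.exp (κ.re * a)) / κ.re) := by
        rw [intervalIntegral.integral_const_mul,
          intervalIntegral.integral_comp_mul_left Real.exp hκ, integral_exp, smul_eq_mul,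
          inv_mul_eq_div]

theorem contDiff_two_of_hasDerivAt {𝕜 F : Type*} [NontriviallyNormedField 𝕜]
    [NormedAddCommGroup F] [NormedSpace 𝕜 F] {f f' f'' : 𝕜 → F}
    (hf : ∀ x, HasDerivAt f (f' x) x) (hf' : ∀ x, HasDerivAt f' (f'' x) x)
    (hf'' : Continuous f'') : ContDiff 𝕜 2 f := by
  have hderiv : deriv f = f' := funext fun x => (hf x).deriv
  have hderiv' : deriv f' = f'' := funext fun x => (hf' x).deriv
  rw [show (2 : WithTop ℕ∞) = 1 + 1 by norm_num, contDiff_succ_iff_deriv, hderiv,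
    contDiff_one_iff_deriv, hderiv']
  exact ⟨fun x => (hf x).differentiableAt, by simp, fun x => (hf' x).differentiableAt, hf''⟩

theorem derivWithin_eq_of_eqOn_of_hasDerivAt {𝕜 F : Type*} [NontriviallyNormedField 𝕜]
    [NormedAddCommGroup F] [NormedSpace 𝕜 F] {f g : 𝕜 → F} {g' : F} {s : Set 𝕜} {x : 𝕜}
    (hs : UniqueDiffWithinAt 𝕜 s x) (hfg : EqOn f g s) (hx : x ∈ s) (hg : HasDerivAt g g' x) :
    derivWithin f s x = g' :=
  (derivWithin_congr hfg (hfg hx)).trans (hg.hasDerivWithinAt.derivWithin hs)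

noncomputable section

namespace DirichletResolvent

def tailIntegral (s : ℂ) (f : ℝ → ℂ) (y : ℝ) : ℂ :=
  ∫ τ in Ioi y, f τ * Complex.exp (s * ((y : ℂ) - (τ : ℂ)))

def headIntegral (s : ℂ) (f : ℝ → ℂ) (y : ℝ) : ℂ :=
  ∫ τ in (0:ℝ)..y, f τ * Complex.exp (-s * ((y : ℂ) - (τ : ℂ)))

def imageIntegral (s : ℂ) (f : ℝ → ℂ) (y : ℝ) : ℂ :=
  ∫ τ in Ioi (0:ℝ), f τ * Complex.exp (-s * ((y : ℂ) + (τ : ℂ)))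

variable {s : ℂ} {f : ℝ → ℂ} {C M : ℝ}

theorem tailIntegral_eq_cexp_mul (s : ℂ) (f : ℝ → ℂ) (y : ℝ) :
    tailIntegral s f y = Complex.exp (s * y) * ∫ τ in Ioi y, f τ * Complex.exp (-s * τ) := by
  rw [tailIntegral, ← integral_const_mul]
  congr 1 with τ
  rw [show s * ((y : ℂ) - τ) = s * y + -s * τ by ring, Complex.exp_add]
  ring

theorem headIntegral_eq_cexp_mul (s : ℂ) (f : ℝ → ℂ) (y : ℝ) :
    headIntegral s f y = Complex.exp (-s * y) * ∫ τ in (0:ℝ)..y, f τ * Complex.exp (s * τ) := by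
  rw [headIntegral, ← intervalIntegral.integral_const_mul]
  congr 1 with τ
  rw [show -s * ((y : ℂ) - τ) = -s * y + s * τ by ring, Complex.exp_add]
  ring

theorem imageIntegral_eq_cexp_mul (s : ℂ) (f : ℝ → ℂ) (y : ℝ) :
    imageIntegral s f y =
      Complex.exp (-s * y) * ∫ τ in Ioi (0:ℝ), f τ * Complex.exp (-s * τ) := by
  rw [imageIntegral, ← integral_const_mul]
  congr 1 with τ
  rw [show -s * ((y : ℂ) + τ) = -s * y + -s * τ by ring, Complex.exp_add]
  ring

theorem tailIntegral_zero (s : ℂ) (f : ℝ → ℂ) : tailIntegral s f 0 = imageIntegral s f 0 := by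
  simp [tailIntegral, imageIntegral, sub_eq_add_neg, neg_mul, mul_neg]

theorem headIntegral_zero (s : ℂ) (f : ℝ → ℂ) : headIntegral s f 0 = 0 := by
  simp [headIntegral]

theorem hasDerivAt_tailIntegral (hs : 0 < s.re) (hf : Continuous f) (hC : ∀ τ, ‖f τ‖ ≤ C)
    (y : ℝ) : HasDerivAt (tailIntegral s f) (s * tailIntegral s f y - f y) y := by
  have hint := integrableOn_mul_cexp_Ioi (κ := -s) (by simpa using hs) hf hC
  have hsplit : tailIntegral s f = fun y : ℝ => Complex.exp (s * y) *
      ((∫ τ in Ioi (0:ℝ), f τ * Complex.exp (-s * τ)) -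
        ∫ τ in (0:ℝ)..y, f τ * Complex.exp (-s * τ)) := by
    ext y
    rw [tailIntegral_eq_cexp_mul, ← intervalIntegral.integral_Ioi_sub_Ioi' (hint 0) (hint y),
      sub_sub_cancel]
  have hprim := ((show Continuous fun τ : ℝ => f τ * Complex.exp (-s * τ) by fun_prop
    ).integral_hasStrictDerivAt 0 y).hasDerivAt
  have hexp : Complex.exp (s * y) * Complex.exp (-s * y) = 1 := by
    rw [← Complex.exp_add]; simp
  rw [hsplit]
  refine ((hasDerivAt_cexp_mul_ofReal s y).mul (hprim.const_sub _)).congr_deriv ?_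
  linear_combination (-f y) * hexp

theorem hasDerivAt_headIntegral (hf : Continuous f) (y : ℝ) :
    HasDerivAt (headIntegral s f) (f y - s * headIntegral s f y) y := by
  have hprim := ((show Continuous fun τ : ℝ => f τ * Complex.exp (s * τ) by fun_prop
    ).integral_hasStrictDerivAt 0 y).hasDerivAt
  have hexp : Complex.exp (-s * y) * Complex.exp (s * y) = 1 := by
    rw [← Complex.exp_add]; simp
  rw [show headIntegral s f = _ from funext (headIntegral_eq_cexp_mul s f)]
  refine ((hasDerivAt_cexp_mul_ofReal (-s) y).mul hprim).congr_deriv ?_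
  linear_combination f y * hexp

theorem hasDerivAt_imageIntegral (s : ℂ) (f : ℝ → ℂ) (y : ℝ) :
    HasDerivAt (imageIntegral s f) (-s * imageIntegral s f y) y := by
  rw [show imageIntegral s f = _ from funext (imageIntegral_eq_cexp_mul s f)]
  simpa only [mul_assoc] using (hasDerivAt_cexp_mul_ofReal (-s) y).mul_const _

theorem norm_tailIntegral_le (hs : 0 < s.re) (hM : ∀ τ, 0 ≤ τ → ‖f τ‖ ≤ M) {y : ℝ}
    (hy : 0 ≤ y) : ‖tailIntegral s f y‖ ≤ M / s.re := by
  have h := norm_integral_Ioi_mul_cexp_le (f := f) (κ := -s) (by simpa using hs)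
    fun τ hτ => hM τ (Ioi_subset_Ici hy hτ)
  rw [tailIntegral_eq_cexp_mul, norm_mul, norm_cexp_mul_ofReal]
  calc Real.exp (s.re * y) * ‖∫ τ in Ioi y, f τ * Complex.exp (-s * τ)‖
      ≤ Real.exp (s.re * y) * (M * (Real.exp ((-s).re * y) / -(-s).re)) := by gcongr
    _ = M / s.re := by
        rw [Complex.neg_re, neg_neg, neg_mul, Real.exp_neg]
        field_simp

theorem norm_headIntegral_le (hs : 0 < s.re) (hM : ∀ τ, 0 ≤ τ → ‖f τ‖ ≤ M) {y : ℝ}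
    (hy : 0 ≤ y) : ‖headIntegral s f y‖ ≤ M * (1 - Real.exp (-s.re * y)) / s.re := by
  have h := norm_intervalIntegral_mul_cexp_le (f := f) (κ := s) hs.ne' hy
    fun τ hτ => hM τ hτ.1.le
  rw [headIntegral_eq_cexp_mul, norm_mul, norm_cexp_mul_ofReal, Complex.neg_re]
  calc Real.exp (-s.re * y) * ‖∫ τ in (0:ℝ)..y, f τ * Complex.exp (s * τ)‖
      ≤ Real.exp (-s.re * y) * (M * ((Real.exp (s.re * y) - Real.exp (s.re * 0)) / s.re)) := by
        gcongr
    _ = M * (1 - Real.exp (-s.re * y)) / s.re := by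
        rw [mul_zero, Real.exp_zero, neg_mul, Real.exp_neg]
        field_simp

theorem norm_imageIntegral_le (hs : 0 < s.re) (hM : ∀ τ, 0 ≤ τ → ‖f τ‖ ≤ M) (y : ℝ) :
    ‖imageIntegral s f y‖ ≤ M * Real.exp (-s.re * y) / s.re := by
  have h := norm_integral_Ioi_mul_cexp_le (f := f) (κ := -s) (a := 0) (by simpa using hs)
    fun τ hτ => hM τ (le_of_lt hτ)
  rw [imageIntegral_eq_cexp_mul, norm_mul, norm_cexp_mul_ofReal, Complex.neg_re]
  calc Real.exp (-s.re * y) * ‖∫ τ in Ioi (0:ℝ), f τ * Complex.exp (-s * τ)‖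
      ≤ Real.exp (-s.re * y) * (M * (Real.exp ((-s).re * 0) / -(-s).re)) := by gcongr
    _ = M * Real.exp (-s.re * y) / s.re := by
        rw [mul_zero, Real.exp_zero, Complex.neg_re, neg_neg]
        ring

end DirichletResolvent

open DirichletResolvent

def dirichletResolvent (ν : ℝ) (s : ℂ) (f : ℝ → ℂ) (y : ℝ) : ℂ :=
  -(1 / (2 * s * ν)) * tailIntegral s f y - (1 / (2 * s * ν)) * headIntegral s f y
    + (1 / (2 * s * ν)) * imageIntegral s f y

def dirichletResolventDeriv (ν : ℝ) (s : ℂ) (f : ℝ → ℂ) (y : ℝ) : ℂ :=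
  (1 / (2 * ν)) * (-tailIntegral s f y + headIntegral s f y - imageIntegral s f y)

variable {ν : ℝ} {s : ℂ} {f : ℝ → ℂ} {C M : ℝ}

theorem dirichletResolvent_zero (ν : ℝ) (s : ℂ) (f : ℝ → ℂ) :
    dirichletResolvent ν s f 0 = 0 := by
  rw [dirichletResolvent, tailIntegral_zero, headIntegral_zero]
  ring

theorem dirichletResolvent_congr {g : ℝ → ℂ} (hfg : EqOn f g (Ici 0)) :
    EqOn (dirichletResolvent ν s f) (dirichletResolvent ν s g) (Ici 0) := by
  intro y (hy : 0 ≤ y)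
  have htail : tailIntegral s f y = tailIntegral s g y :=
    setIntegral_congr_fun measurableSet_Ioi fun τ hτ => by rw [hfg (Ioi_subset_Ici hy hτ)]
  have hhead : headIntegral s f y = headIntegral s g y :=
    intervalIntegral.integral_congr fun τ hτ => by
      rw [hfg (uIcc_of_le hy ▸ hτ).1]
  have himage : imageIntegral s f y = imageIntegral s g y :=
    setIntegral_congr_fun measurableSet_Ioi fun τ hτ => by rw [hfg (Ioi_subset_Ici_self hτ)]
  rw [dirichletResolvent, dirichletResolvent, htail, hhead, himage]

theorem hasDerivAt_dirichletResolvent (hs : 0 < s.re) (hf : Continuous f)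
    (hC : ∀ τ, ‖f τ‖ ≤ C) (y : ℝ) :
    HasDerivAt (dirichletResolvent ν s f) (dirichletResolventDeriv ν s f y) y := by
  have hs0 : s ≠ 0 := fun h => by simp [h] at hs
  refine ((((hasDerivAt_tailIntegral hs hf hC y).const_mul _).sub
    ((hasDerivAt_headIntegral hf y).const_mul _)).add
    ((hasDerivAt_imageIntegral s f y).const_mul _)).congr_deriv ?_
  rw [dirichletResolventDeriv]
  field_simp
  ring

theorem hasDerivAt_dirichletResolventDeriv (hs : 0 < s.re) (hf : Continuous f)
    (hC : ∀ τ, ‖f τ‖ ≤ C) (y : ℝ) :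
    HasDerivAt (dirichletResolventDeriv ν s f)
      (s ^ 2 * dirichletResolvent ν s f y + f y / ν) y := by
  have hs0 : s ≠ 0 := fun h => by simp [h] at hs
  refine ((((hasDerivAt_tailIntegral hs hf hC y).neg.add (hasDerivAt_headIntegral hf y)).sub
    (hasDerivAt_imageIntegral s f y)).const_mul _).congr_deriv ?_
  rw [dirichletResolvent]
  field_simp
  ring

theorem contDiff_dirichletResolvent (hs : 0 < s.re) (hf : Continuous f)
    (hC : ∀ τ, ‖f τ‖ ≤ C) : ContDiff ℝ 2 (dirichletResolvent ν s f) := by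
  have hR : Continuous (dirichletResolvent ν s f) := continuous_iff_continuousAt.2 fun y =>
    (hasDerivAt_dirichletResolvent hs hf hC y).continuousAt
  exact contDiff_two_of_hasDerivAt (hasDerivAt_dirichletResolvent hs hf hC)
    (hasDerivAt_dirichletResolventDeriv hs hf hC) ((continuous_const.mul hR).add (hf.div_const _))

theorem norm_dirichletResolvent_le (hν : 0 < ν) (hs : 0 < s.re) (hM : ∀ τ, 0 ≤ τ → ‖f τ‖ ≤ M)
    {y : ℝ} (hy : 0 ≤ y) : ‖dirichletResolvent ν s f y‖ ≤ M / (ν * ‖s‖ * s.re) := by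
  have hc : ‖1 / (2 * s * ν)‖ = 1 / (2 * ‖s‖ * ν) := by simp [abs_of_pos hν]
  calc ‖dirichletResolvent ν s f y‖ = ‖1 / (2 * s * ν)‖ *
        ‖-tailIntegral s f y - headIntegral s f y + imageIntegral s f y‖ := by
        rw [dirichletResolvent, ← norm_mul]
        congr 1
        ring
    _ ≤ 1 / (2 * ‖s‖ * ν) *
        (‖tailIntegral s f y‖ + ‖headIntegral s f y‖ + ‖imageIntegral s f y‖) := by
        rw [hc]
        grw [norm_add_le, norm_sub_le, norm_neg]
    _ ≤ 1 / (2 * ‖s‖ * ν) * (M / s.re + M * (1 - Real.exp (-s.re * y)) / s.re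
          + M * Real.exp (-s.re * y) / s.re) := by
        grw [norm_tailIntegral_le hs hM hy, norm_headIntegral_le hs hM hy,
          norm_imageIntegral_le hs hM y]
    _ = M / (ν * ‖s‖ * s.re) := by
        field_simp
        ring

end

/-- Explicit Dirichlet resolvent of `ν d²/dy²` on the half line: the formula
`v` solves `ν v'' - λ v = f`, vanishes at `0`, and satisfies the resolvent bound
`|v(y)| ≤ (sup |f|) / (ν |s| Re s)`, where `λ = ν s²` with `Re s > 0`. -/
theorem stmt_0 (ν : ℝ) (hν : 0 < ν) (s : ℂ) (hs : 0 < s.re)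
    (f : ℝ → ℂ) (hf_cont : ContinuousOn f (Ici 0))
    (hf_bdd : BddAbove (range fun τ : Ici (0:ℝ) => ‖f τ.1‖))
    (v : ℝ → ℂ)
    (hv : ∀ y : ℝ, v y =
      -(1 / (2 * s * ν)) * (∫ τ in Ioi y, f τ * Complex.exp (s * ((y : ℂ) - (τ : ℂ))))
      - (1 / (2 * s * ν)) * (∫ τ in (0:ℝ)..y, f τ * Complex.exp (-s * ((y : ℂ) - (τ : ℂ))))
      + (1 / (2 * s * ν)) * ∫ τ in Ioi (0:ℝ), f τ * Complex.exp (-s * ((y : ℂ) + (τ : ℂ)))) :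
    ContDiffOn ℝ 2 v (Ici 0) ∧
    (∀ y ∈ Ici (0:ℝ),
      (ν : ℂ) * derivWithin (derivWithin v (Ici 0)) (Ici 0) y - (ν : ℂ) * s ^ 2 * v y = f y) ∧
    v 0 = 0 ∧
    (∀ y ∈ Ici (0:ℝ),
      ‖v y‖ ≤ (⨆ τ : Ici (0:ℝ), ‖f τ.1‖) / (ν * ‖s‖ * s.re)) := by
  obtain rfl : v = dirichletResolvent ν s f := funext hv
  set M := ⨆ τ : Ici (0:ℝ), ‖f τ.1‖
  have hM : ∀ τ, 0 ≤ τ → ‖f τ‖ ≤ M := fun τ hτ => le_ciSup hf_bdd ⟨τ, hτ⟩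
  set g : ℝ → ℂ := fun y => f (max y 0)
  have hg : Continuous g := hf_cont.comp_continuous (by fun_prop) fun y => le_max_right y 0
  have hgM : ∀ τ, ‖g τ‖ ≤ M := fun τ => hM _ (le_max_right τ 0)
  have hfg : EqOn f g (Ici 0) := fun y (hy : 0 ≤ y) => by simp [g, max_eq_left hy]
  have hRg := dirichletResolvent_congr (ν := ν) (s := s) hfg
  have hR'g : EqOn (derivWithin (dirichletResolvent ν s f) (Ici 0))
      (dirichletResolventDeriv ν s g) (Ici 0) := fun y hy =>
    derivWithin_eq_of_eqOn_of_hasDerivAt (uniqueDiffOn_Ici 0 y hy) hRg hy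
      (hasDerivAt_dirichletResolvent hs hg hgM y)
  refine ⟨(contDiff_dirichletResolvent hs hg hgM).contDiffOn.congr hRg, fun y hy => ?_,
    dirichletResolvent_zero ν s f, fun y hy => norm_dirichletResolvent_le hν hs hM hy⟩
  rw [derivWithin_eq_of_eqOn_of_hasDerivAt (uniqueDiffOn_Ici 0 y hy) hR'g hy
    (hasDerivAt_dirichletResolventDeriv hs hg hgM y), hRg hy, hfg hy]
  have hν0 : (ν : ℂ) ≠ 0 := Complex.ofReal_ne_zero.2 hν.ne'
  field_simp
  ring
end

section
/- Let ν > 0, η > 0, M ≥ 0, let s ∈ ℂ with Re s > η, and let f : [0,∞) → ℂ be continuous with |f(y)| ≤ M e^{−ηy} for all y ≥ 0. Define v(y) = −(1/(2sν)) ∫_y^∞ f(τ) e^{s(y−τ)} dτ − (1/(2sν)) ∫_0^y f(τ) e^{−s(y−τ)} dτ + (1/(2sν)) ∫_0^∞ f(τ) e^{−s(y+τ)} dτ. Then for all y ≥ 0 one has |v(y)| e^{ηy} ≤ 3M / (2ν |s| (Re s − η)). -/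
/-!
Pulling the modulus inside each of the three integrals bounds its integrand by
`M e^{-ητ}` times a real exponential in `τ` (the modulus of the kernel), whose integral is
explicit and at most `M e^{-ηy} / (Re s ± η)`. Since `Re s + η ≥ Re s - η`, the three terms
together are at most `3 M e^{-ηy} / (Re s - η)`, and `|1 / (2 s ν)| = 1 / (2 ν |s|)`.
-/

open MeasureTheory Set

section ExponentialWeight

variable {f : ℝ → ℂ} {M η : ℝ}

lemma norm_setIntegral_mul_cexp_le (hf : ∀ y ∈ Ici (0:ℝ), ‖f y‖ ≤ M * Real.exp (-η * y))
    {S : Set ℝ} (hS : MeasurableSet S) (hS₀ : S ⊆ Ici 0) {z : ℝ → ℂ} {b c : ℝ}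
    (hz : ∀ τ, (z τ).re - η * τ = b + c * τ)
    (hint : IntegrableOn (fun τ => Real.exp (c * τ)) S) :
    ‖∫ τ in S, f τ * Complex.exp (z τ)‖ ≤ M * Real.exp b * ∫ τ in S, Real.exp (c * τ) := by
  rw [← integral_const_mul]
  refine norm_integral_le_of_norm_le (hint.const_mul _) ?_
  refine (ae_restrict_iff' hS).2 (Filter.Eventually.of_forall fun τ hτ => ?_)
  calc ‖f τ * Complex.exp (z τ)‖ = ‖f τ‖ * Real.exp (z τ).re := by
        rw [norm_mul, Complex.norm_exp]
    _ ≤ M * Real.exp (-η * τ) * Real.exp (z τ).re := by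
        gcongr; exact hf τ (hS₀ hτ)
    _ = M * Real.exp b * Real.exp (c * τ) := by
        rw [mul_assoc, mul_assoc, ← Real.exp_add, ← Real.exp_add, ← hz]; ring_nf

variable {s : ℂ} {y : ℝ}

lemma norm_integral_Ioi_mul_cexp_sub_le (hf : ∀ y ∈ Ici (0:ℝ), ‖f y‖ ≤ M * Real.exp (-η * y))
    (hy : 0 ≤ y) (hsη : 0 < s.re + η) :
    ‖∫ τ in Ioi y, f τ * Complex.exp (s * ((y : ℂ) - (τ : ℂ)))‖ ≤
      M / (s.re + η) * Real.exp (-η * y) := by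
  have hc : -(s.re + η) < 0 := by linarith
  refine (norm_setIntegral_mul_cexp_le hf measurableSet_Ioi (Ioi_subset_Ici hy)
    (b := s.re * y) (c := -(s.re + η)) (fun τ => by rw [← Complex.ofReal_sub, Complex.re_mul_ofReal]; ring)
    (integrableOn_exp_mul_Ioi hc y)).trans_eq ?_
  rw [integral_exp_mul_Ioi hc, neg_div_neg_eq,
    show -η * y = s.re * y + -(s.re + η) * y by ring, Real.exp_add]
  ring

lemma norm_intervalIntegral_mul_cexp_sub_le (hM : 0 ≤ M)
    (hf : ∀ y ∈ Ici (0:ℝ), ‖f y‖ ≤ M * Real.exp (-η * y)) (hy : 0 ≤ y) (hsη : η < s.re) :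
    ‖∫ τ in (0:ℝ)..y, f τ * Complex.exp (-s * ((y : ℂ) - (τ : ℂ)))‖ ≤
      M / (s.re - η) * Real.exp (-η * y) := by
  have hc : 0 < s.re - η := by linarith
  rw [intervalIntegral.integral_of_le hy]
  refine (norm_setIntegral_mul_cexp_le hf measurableSet_Ioc (fun τ hτ => hτ.1.le)
    (b := -(s.re * y)) (c := s.re - η)
    (fun τ => by rw [← Complex.ofReal_sub, Complex.re_mul_ofReal, Complex.neg_re]; ring)
    ((integrableOn_exp_mul_Iic hc y).mono_set Ioc_subset_Iic_self)).trans ?_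
  have hIoc :
      ∫ τ in Ioc 0 y, Real.exp ((s.re - η) * τ) ≤ Real.exp ((s.re - η) * y) / (s.re - η) := by
    rw [← integral_exp_mul_Iic hc y]
    exact setIntegral_mono_set (integrableOn_exp_mul_Iic hc y)
      (Filter.Eventually.of_forall fun τ => (Real.exp_pos _).le) Ioc_subset_Iic_self.eventuallyLE
  calc M * Real.exp (-(s.re * y)) * ∫ τ in Ioc 0 y, Real.exp ((s.re - η) * τ)
      ≤ M * Real.exp (-(s.re * y)) * (Real.exp ((s.re - η) * y) / (s.re - η)) := by gcongr
    _ = M / (s.re - η) * Real.exp (-η * y) := by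
      rw [show -η * y = -(s.re * y) + (s.re - η) * y by ring, Real.exp_add]; ring

lemma norm_integral_Ioi_mul_cexp_add_le (hM : 0 ≤ M)
    (hf : ∀ y ∈ Ici (0:ℝ), ‖f y‖ ≤ M * Real.exp (-η * y)) (hy : 0 ≤ y) (hsη : 0 < s.re + η)
    (hηs : η ≤ s.re) :
    ‖∫ τ in Ioi (0:ℝ), f τ * Complex.exp (-s * ((y : ℂ) + (τ : ℂ)))‖ ≤
      M / (s.re + η) * Real.exp (-η * y) := by
  have hc : -(s.re + η) < 0 := by linarith
  refine (norm_setIntegral_mul_cexp_le hf measurableSet_Ioi Ioi_subset_Ici_self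
    (b := -(s.re * y)) (c := -(s.re + η))
    (fun τ => by rw [← Complex.ofReal_add, Complex.re_mul_ofReal, Complex.neg_re]; ring)
    (integrableOn_exp_mul_Ioi hc 0)).trans ?_
  rw [integral_exp_mul_Ioi hc, mul_zero, Real.exp_zero, neg_div_neg_eq, mul_one_div,
    mul_div_right_comm]
  gcongr
  nlinarith

end ExponentialWeight

theorem stmt_2_general (ν η M : ℝ) (hν : 0 < ν) (hη : 0 < η) (hM : 0 ≤ M)
    (s : ℂ) (hs : η < s.re)
    (f : ℝ → ℂ)
    (hf : ∀ y ∈ Ici (0:ℝ), ‖f y‖ ≤ M * Real.exp (-η * y))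
    (v : ℝ → ℂ)
    (hv : ∀ y : ℝ, v y =
      -(1 / (2 * s * ν)) * (∫ τ in Ioi y, f τ * Complex.exp (s * ((y : ℂ) - (τ : ℂ))))
      - (1 / (2 * s * ν)) * (∫ τ in (0:ℝ)..y, f τ * Complex.exp (-s * ((y : ℂ) - (τ : ℂ))))
      + (1 / (2 * s * ν)) * ∫ τ in Ioi (0:ℝ), f τ * Complex.exp (-s * ((y : ℂ) + (τ : ℂ)))) :
    ∀ y ∈ Ici (0:ℝ),
      ‖v y‖ * Real.exp (η * y) ≤
        3 * M / (2 * ν * ‖s‖ * (s.re - η)) := by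
  intro y hy
  have hsη : 0 < s.re - η := by linarith
  have hc : ‖1 / (2 * s * (ν : ℂ))‖ = 1 / (2 * ν * ‖s‖) := by
    simp [Complex.norm_real, abs_of_pos hν]
    ring
  have h₁ := norm_integral_Ioi_mul_cexp_sub_le hf hy (s := s) (by linarith)
  have h₂ := norm_intervalIntegral_mul_cexp_sub_le hM hf hy hs
  have h₃ := norm_integral_Ioi_mul_cexp_add_le hM hf hy (s := s) (by linarith) hs.le
  have hweight : Real.exp (-η * y) * Real.exp (η * y) = 1 := by
    rw [← Real.exp_add, neg_mul, neg_add_cancel, Real.exp_zero]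
  have hsum : M / (s.re + η) + M / (s.re - η) + M / (s.re + η) ≤ 3 * M / (s.re - η) := by
    have : M / (s.re + η) ≤ M / (s.re - η) := div_le_div_of_nonneg_left hM hsη (by linarith)
    rw [mul_div_assoc]; linarith
  calc ‖v y‖ * Real.exp (η * y)
      ≤ 1 / (2 * ν * ‖s‖) * ((M / (s.re + η) + M / (s.re - η) + M / (s.re + η))
          * Real.exp (-η * y)) * Real.exp (η * y) := by
        rw [hv y, ← hc]
        gcongr
        refine ((norm_add_le _ _).trans (add_le_add_left (norm_sub_le _ _) _)).trans ?_
        simp only [norm_mul, norm_neg]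
        nlinarith [norm_nonneg (1 / (2 * s * (ν : ℂ)))]
    _ = 1 / (2 * ν * ‖s‖) * (M / (s.re + η) + M / (s.re - η) + M / (s.re + η)) := by
        simp only [mul_assoc, hweight, mul_one]
    _ ≤ 1 / (2 * ν * ‖s‖) * (3 * M / (s.re - η)) := by gcongr
    _ = 3 * M / (2 * ν * ‖s‖ * (s.re - η)) := by
        rw [one_div_mul_eq_div, div_div, mul_comm (s.re - η)]

/-- Weighted estimate for the explicit Dirichlet resolvent of `ν d²/dy²` on the half line:
if `|f(y)| ≤ M e^{-ηy}` and `Re s > η`, then `|v(y)| e^{ηy} ≤ 3M/(2ν|s|(Re s - η))`. -/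
theorem stmt_2 (ν η M : ℝ) (hν : 0 < ν) (hη : 0 < η) (hM : 0 ≤ M)
    (s : ℂ) (hs : η < s.re)
    (f : ℝ → ℂ) (hf_cont : ContinuousOn f (Ici 0))
    (hf : ∀ y ∈ Ici (0:ℝ), ‖f y‖ ≤ M * Real.exp (-η * y))
    (v : ℝ → ℂ)
    (hv : ∀ y : ℝ, v y =
      -(1 / (2 * s * ν)) * (∫ τ in Ioi y, f τ * Complex.exp (s * ((y : ℂ) - (τ : ℂ))))
      - (1 / (2 * s * ν)) * (∫ τ in (0:ℝ)..y, f τ * Complex.exp (-s * ((y : ℂ) - (τ : ℂ))))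
      + (1 / (2 * s * ν)) * ∫ τ in Ioi (0:ℝ), f τ * Complex.exp (-s * ((y : ℂ) + (τ : ℂ)))) :
    ∀ y ∈ Ici (0:ℝ),
      ‖v y‖ * Real.exp (η * y) ≤
        3 * M / (2 * ν * ‖s‖ * (s.re - η)) :=
  stmt_2_general ν η M hν hη hM s hs f hf v hv
end

section
/- Let b ≥ 0 be a real number, let z ∈ ℂ be nonzero with principal argument θ = arg z ∈ (−π, π], and let s ∈ ℂ satisfy s² = b + z. Then |s|² ≥ cos(θ/2) · (b + |z|). Moreover, if Re s ≥ 0, then (Re s)² ≥ (1/2) [ (1 + cos(θ/2)) b + (cos(θ/2) + cos θ) |z| ]. -/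
/-!
Writing `r = ‖z‖`, `θ = arg z` and `c = cos (θ / 2)`, we have `‖s‖⁴ = ‖b + z‖² = b² + r² + 2 b r cos θ`,
and `cos θ = 2c² - 1` turns this into `c² (b + r)² + (1 - c²)(b - r)² ≥ (c (b + r))²`.
Since `2 (Re s)² = ‖s‖² + Re (s²) = ‖s‖² + b + r cos θ`, the second bound follows from the first.
-/

open Complex

theorem Complex.sq_norm_ofReal_add (b : ℝ) (z : ℂ) :
    ‖(b : ℂ) + z‖ ^ 2 = b ^ 2 + ‖z‖ ^ 2 + 2 * b * (‖z‖ * Real.cos (arg z)) := by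
  rw [norm_mul_cos_arg, Complex.sq_norm, Complex.sq_norm, normSq_apply, normSq_apply]
  simp only [add_re, add_im, ofReal_re, ofReal_im, zero_add]
  ring

theorem Real.sq_cos_half_mul_add_le (θ b r : ℝ) :
    (Real.cos (θ / 2) * (b + r)) ^ 2 ≤ b ^ 2 + r ^ 2 + 2 * b * r * Real.cos θ := by
  have hcos : Real.cos θ = 2 * Real.cos (θ / 2) ^ 2 - 1 := by
    rw [← Real.cos_two_mul, mul_div_cancel₀ θ two_ne_zero]
  have hc : Real.cos (θ / 2) ^ 2 ≤ 1 := Real.cos_sq_le_one _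
  rw [hcos]
  nlinarith [mul_nonneg (sub_nonneg.mpr hc) (sq_nonneg (b - r))]

theorem Complex.cos_half_arg_mul_le_sq_norm {b : ℝ} {z s : ℂ} (hs : s ^ 2 = b + z) :
    Real.cos (arg z / 2) * (b + ‖z‖) ≤ ‖s‖ ^ 2 := by
  have h4 : (‖s‖ ^ 2) ^ 2 = b ^ 2 + ‖z‖ ^ 2 + 2 * b * ‖z‖ * Real.cos (arg z) := by
    rw [← norm_pow, hs, sq_norm_ofReal_add]
    ring
  refine le_of_sq_le_sq ?_ (by positivity)
  rw [h4]
  exact Real.sq_cos_half_mul_add_le _ _ _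

theorem Complex.two_mul_re_sq (s : ℂ) : 2 * s.re ^ 2 = ‖s‖ ^ 2 + (s ^ 2).re := by
  rw [Complex.sq_norm, normSq_apply, sq s, mul_re]
  ring

theorem stmt_5_general (b : ℝ) (z : ℂ) (s : ℂ)
    (hs : s ^ 2 = (b : ℂ) + z) :
    ‖s‖ ^ 2 ≥ Real.cos (z.arg / 2) * (b + ‖z‖) ∧
    (0 ≤ s.re →
      s.re ^ 2 ≥ (1 / 2) * ((1 + Real.cos (z.arg / 2)) * b +
        (Real.cos (z.arg / 2) + Real.cos z.arg) * ‖z‖)) := by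
  have hnorm := cos_half_arg_mul_le_sq_norm hs
  refine ⟨hnorm, fun _ => ?_⟩
  have hre : (s ^ 2).re = b + ‖z‖ * Real.cos (arg z) := by
    rw [hs, norm_mul_cos_arg, add_re, ofReal_re]
  have := two_mul_re_sq s
  linarith

/-- If `s² = b + z` with `b ≥ 0` real and `z ≠ 0`, then
`|s|² ≥ cos(arg z / 2)(b + |z|)`; if moreover `Re s ≥ 0` then
`(Re s)² ≥ (1/2)[(1 + cos(arg z/2)) b + (cos(arg z/2) + cos(arg z)) |z|]`. -/
theorem stmt_5 (b : ℝ) (hb : 0 ≤ b) (z : ℂ) (hz : z ≠ 0) (s : ℂ)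
    (hs : s ^ 2 = (b : ℂ) + z) :
    ‖s‖ ^ 2 ≥ Real.cos (z.arg / 2) * (b + ‖z‖) ∧
    (0 ≤ s.re →
      s.re ^ 2 ≥ (1 / 2) * ((1 + Real.cos (z.arg / 2)) * b +
        (Real.cos (z.arg / 2) + Real.cos z.arg) * ‖z‖)) :=
  stmt_5_general b z s hs
end

section
/- Let ν > 0, α > 0 and δ ∈ (0, π/6). There exists a constant C > 0, depending only on ν, α and δ, such that for every integer n with n ≠ 0 and every λ ∈ ℂ with λ + να² ≠ 0 and |arg(λ + να²)| ≤ 2π/3 − δ, the complex number s_n determined by Re s_n > 0 and s_n² = n²α² + λ/ν satisfies |s_n| ≥ Re s_n ≥ C ( α √(n² − 1) + |λ + να²|^{1/2} ). -/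
/-!
Write `s² = a + z` with `a = α²(n² - 1) ≥ 0` and `z = (λ + να²)/ν`. The sector condition
`|arg z| ≤ 2π/3` says `Re z ≥ -|z|/2`; this half-plane-type condition survives adding the
nonnegative real `a`, and it gives `|a + z| ≥ (a + |z|)/2`. For a square root `s` of a `w`
satisfying it, `(Im s)² ≤ 3 (Re s)²`, so `|w| = |s|² ≤ 4 (Re s)²`. Hence
`√a + √|z| ≤ √(2(a + |z|)) ≤ 4 Re s`.
-/

open Real

lemma Real.sqrt_add_sqrt_le_sqrt_two_mul {a b : ℝ} (ha : 0 ≤ a) (hb : 0 ≤ b) :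
    √a + √b ≤ √(2 * (a + b)) :=
  Real.le_sqrt_of_sq_le <| by
    nlinarith [Real.sq_sqrt ha, Real.sq_sqrt hb, sq_nonneg (√a - √b)]

namespace Complex

lemma norm_sq_eq_re_sq_add_im_sq (z : ℂ) : ‖z‖ ^ 2 = z.re ^ 2 + z.im ^ 2 := by
  rw [Complex.sq_norm, normSq_apply]; ring

lemma neg_half_norm_le_re_of_abs_arg_le {z : ℂ} (h : |arg z| ≤ 2 * π / 3) :
    -(‖z‖ / 2) ≤ z.re := by
  rcases eq_or_ne z 0 with rfl | hz
  · simp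
  have hcos : Real.cos (2 * π / 3) ≤ Real.cos |arg z| :=
    Real.cos_le_cos_of_nonneg_of_le_pi (abs_nonneg _) (by linarith [pi_pos]) h
  rw [Real.cos_abs, cos_arg hz, show 2 * π / 3 = π - π / 3 by ring, Real.cos_pi_sub,
    Real.cos_pi_div_three, le_div_iff₀ (norm_pos_iff.mpr hz)] at hcos
  linarith

lemma neg_half_norm_le_re_div_ofReal {z : ℂ} {r : ℝ} (hr : 0 ≤ r) (hz : -(‖z‖ / 2) ≤ z.re) :
    -(‖z / r‖ / 2) ≤ (z / r).re := by
  rw [norm_div, norm_real, Real.norm_of_nonneg hr, div_ofReal_re, div_right_comm, ← neg_div]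
  exact div_le_div_of_nonneg_right hz hr

lemma neg_half_norm_le_re_ofReal_add {a : ℝ} {z : ℂ} (ha : 0 ≤ a) (hz : -(‖z‖ / 2) ≤ z.re) :
    -(‖(a : ℂ) + z‖ / 2) ≤ ((a : ℂ) + z).re := by
  have hw := norm_sq_eq_re_sq_add_im_sq ((a : ℂ) + z)
  have hz2 := norm_sq_eq_re_sq_add_im_sq z
  simp only [add_re, add_im, ofReal_re, ofReal_im, zero_add] at hw ⊢
  rcases le_or_gt 0 (a + z.re) with h | h
  · linarith [norm_nonneg ((a : ℂ) + z)]
  · have h3 : 3 * z.re ^ 2 ≤ z.im ^ 2 := by nlinarith [norm_nonneg z]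
    nlinarith [norm_nonneg ((a : ℂ) + z)]

lemma add_norm_le_two_mul_norm_ofReal_add {a : ℝ} {z : ℂ} (ha : 0 ≤ a)
    (hz : -(‖z‖ / 2) ≤ z.re) : a + ‖z‖ ≤ 2 * ‖(a : ℂ) + z‖ := by
  have hw := norm_sq_eq_re_sq_add_im_sq ((a : ℂ) + z)
  have hz2 := norm_sq_eq_re_sq_add_im_sq z
  simp only [add_re, add_im, ofReal_re, ofReal_im, zero_add] at hw
  have : (a + ‖z‖) ^ 2 ≤ (2 * ‖(a : ℂ) + z‖) ^ 2 := by
    nlinarith [sq_nonneg (a - ‖z‖)]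
  exact (pow_le_pow_iff_left₀ (by positivity) (by positivity) two_ne_zero).mp this

lemma norm_le_four_mul_re_sq_of_sq_eq {s w : ℂ} (hs : s ^ 2 = w) (hw : -(‖w‖ / 2) ≤ w.re) :
    ‖w‖ ≤ 4 * s.re ^ 2 := by
  have hnorm : ‖w‖ = s.re ^ 2 + s.im ^ 2 := by
    rw [← hs, norm_pow, norm_sq_eq_re_sq_add_im_sq]
  have hre : w.re = s.re ^ 2 - s.im ^ 2 := by rw [← hs]; simp [sq]
  rw [hnorm, hre] at hw
  linarith

lemma sqrt_add_sqrt_norm_le_four_mul_re {a : ℝ} {z s : ℂ} (ha : 0 ≤ a)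
    (hz : -(‖z‖ / 2) ≤ z.re) (hs : s ^ 2 = a + z) (hre : 0 ≤ s.re) :
    √a + √‖z‖ ≤ 4 * s.re := calc
  √a + √‖z‖ ≤ √(2 * (a + ‖z‖)) := Real.sqrt_add_sqrt_le_sqrt_two_mul ha (norm_nonneg z)
  _ ≤ √((4 * s.re) ^ 2) := by
    gcongr
    linarith [add_norm_le_two_mul_norm_ofReal_add ha hz,
      norm_le_four_mul_re_sq_of_sq_eq hs (neg_half_norm_le_re_ofReal_add ha hz)]
  _ = 4 * s.re := Real.sqrt_sq (by positivity)

end Complex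

theorem stmt_6_general (ν α δ : ℝ) (hν : 0 < ν) (hδ : 0 < δ) :
    ∃ C : ℝ, 0 < C ∧
      ∀ n : ℤ, n ≠ 0 →
        ∀ lam : ℂ, lam + (ν : ℂ) * (α : ℂ) ^ 2 ≠ 0 →
          |(lam + (ν : ℂ) * (α : ℂ) ^ 2).arg| ≤ 2 * π / 3 - δ →
          ∀ s : ℂ, 0 < s.re →
            s ^ 2 = (n : ℂ) ^ 2 * (α : ℂ) ^ 2 + lam / (ν : ℂ) →
            ‖s‖ ≥ s.re ∧
            s.re ≥ C * (α * Real.sqrt ((n : ℝ) ^ 2 - 1) +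
              Real.sqrt ‖lam + (ν : ℂ) * (α : ℂ) ^ 2‖) := by
  refine ⟨(4 * (1 + √ν))⁻¹, by positivity, fun n hn lam _ harg s hs hs2 ↦ ?_⟩
  set μ := lam + (ν : ℂ) * (α : ℂ) ^ 2
  set a := α ^ 2 * ((n : ℝ) ^ 2 - 1)
  have ha : 0 ≤ a := mul_nonneg (sq_nonneg α)
    (sub_nonneg.mpr (mod_cast (one_le_sq_iff_one_le_abs _).mpr (Int.one_le_abs hn)))
  have hsz : s ^ 2 = a + μ / ν := by
    rw [hs2]
    have : (ν : ℂ) ≠ 0 := by exact_mod_cast hν.ne'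
    push_cast [a, μ]
    field_simp
    ring
  have hsector : -(‖μ / ν‖ / 2) ≤ (μ / ν).re := Complex.neg_half_norm_le_re_div_ofReal hν.le
    (Complex.neg_half_norm_le_re_of_abs_arg_le (harg.trans (by linarith)))
  have key := Complex.sqrt_add_sqrt_norm_le_four_mul_re ha hsector hsz hs.le
  have hP : α * √((n : ℝ) ^ 2 - 1) ≤ √a := by
    rw [Real.sqrt_mul (sq_nonneg α), Real.sqrt_sq_eq_abs]
    exact mul_le_mul_of_nonneg_right (le_abs_self α) (Real.sqrt_nonneg _)
  have hQ : √‖μ‖ = √ν * √‖μ / ν‖ := by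
    rw [← Real.sqrt_mul hν.le, norm_div, Complex.norm_real, Real.norm_of_nonneg hν.le,
      mul_div_cancel₀ _ hν.ne']
  refine ⟨Complex.re_le_norm s, ?_⟩
  rw [ge_iff_le, hQ, inv_mul_le_iff₀ (by positivity)]
  nlinarith [Real.sqrt_nonneg ν, Real.sqrt_nonneg a, Real.sqrt_nonneg ‖μ / ν‖]

/-- Lower bound for the square root `s_n` of the Stokes symbol `n²α² + λ/ν` in the
sector `|arg(λ + να²)| ≤ 2π/3 - δ`: there is `C > 0` depending only on `ν, α, δ`
with `|s_n| ≥ Re s_n ≥ C(α√(n²-1) + |λ + να²|^{1/2})`. -/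
theorem stmt_6 (ν α δ : ℝ) (hν : 0 < ν) (hα : 0 < α) (hδ : 0 < δ)
    (hδ' : δ < π / 6) :
    ∃ C : ℝ, 0 < C ∧
      ∀ n : ℤ, n ≠ 0 →
        ∀ lam : ℂ, lam + (ν : ℂ) * (α : ℂ) ^ 2 ≠ 0 →
          |(lam + (ν : ℂ) * (α : ℂ) ^ 2).arg| ≤ 2 * π / 3 - δ →
          ∀ s : ℂ, 0 < s.re →
            s ^ 2 = (n : ℂ) ^ 2 * (α : ℂ) ^ 2 + lam / (ν : ℂ) →
            ‖s‖ ≥ s.re ∧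
            s.re ≥ C * (α * Real.sqrt ((n : ℝ) ^ 2 - 1) +
              Real.sqrt ‖lam + (ν : ℂ) * (α : ℂ) ^ 2‖) :=
  stmt_6_general ν α δ hν hδ
end

section
/- Let ν > 0, α > 0, U₊ > 0 and η ∈ (0, α). Let n be an integer with |n| ≥ 1, let λ ∈ ℂ, and suppose s ∈ ℂ satisfies s² = n²α² + (λ − i n α U₊)/ν and Re s = η. Then Re λ = −(Im λ − nαU₊)²/(4νη²) − ν(α²n² − η²); consequently Re λ ≤ −ν (Im λ)²/(U₊² + 4ν²η²) + νη² and Re λ ≤ −ν(α² − η²). -/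
/-- The parabolas `Re s = η` for the advected Stokes symbol: if
`s² = n²α² + (λ - inαU₊)/ν` with `Re s = η`, then `λ` lies on an explicit parabola,
and consequently inside the envelope region
`Re λ ≤ -ν(Im λ)²/(U₊² + 4ν²η²) + νη²` with `Re λ ≤ -ν(α² - η²)`. -/
theorem stmt_8 (ν α U η : ℝ) (hν : 0 < ν) (hα : 0 < α) (hU : 0 < U)
    (hη : 0 < η) (hηα : η < α)
    (n : ℤ) (hn : 1 ≤ |n|) (lam : ℂ) (s : ℂ)
    (hs2 : s ^ 2 = (n : ℂ) ^ 2 * (α : ℂ) ^ 2 +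
      (lam - Complex.I * (n : ℂ) * (α : ℂ) * (U : ℂ)) / (ν : ℂ))
    (hsre : s.re = η) :
    lam.re = -(lam.im - (n : ℝ) * α * U) ^ 2 / (4 * ν * η ^ 2)
        - ν * (α ^ 2 * (n : ℝ) ^ 2 - η ^ 2) ∧
    lam.re ≤ -ν * lam.im ^ 2 / (U ^ 2 + 4 * ν ^ 2 * η ^ 2) + ν * η ^ 2 ∧
    lam.re ≤ -ν * (α ^ 2 - η ^ 2) := by
  set t := s.im with ht
  have hν' : (ν : ℝ) ≠ 0 := ne_of_gt hν
  have hre := congrArg Complex.re hs2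
  have him := congrArg Complex.im hs2
  simp [sq, Complex.mul_re, Complex.mul_im, Complex.add_re, Complex.add_im,
    Complex.sub_re, Complex.sub_im, Complex.div_ofReal_re, Complex.div_ofReal_im,
    hsre, Complex.I_re, Complex.I_im, Complex.ofReal_re, Complex.ofReal_im] at hre him
  -- hre : η * η - t * t = n*n*(α*α) + (lam.re - ...)/ν
  have hR : lam.re = ν * (η ^ 2 - t ^ 2 - (n : ℝ) ^ 2 * α ^ 2) := by
    field_simp at hre
    nlinarith [hre]
  have hI : lam.im - (n : ℝ) * α * U = 2 * ν * η * t := by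
    field_simp at him
    nlinarith [him]
  have hn2 : (1 : ℝ) ≤ (n : ℝ) ^ 2 := by
    have h1 : (1 : ℤ) ≤ n ^ 2 := by nlinarith [sq_abs n]
    exact_mod_cast h1
  have hη' : η ≠ 0 := ne_of_gt hη
  refine ⟨?_, ?_, ?_⟩
  · rw [hR, hI]
    field_simp
    ring
  · have hD : 0 < U ^ 2 + 4 * ν ^ 2 * η ^ 2 := by positivity
    rw [hR]
    rw [div_add' _ _ _ (ne_of_gt hD), le_div_iff₀ hD]
    have hm : lam.im = 2 * ν * η * t + (n : ℝ) * α * U := by linarith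
    rw [hm]
    nlinarith [mul_nonneg hν.le (sq_nonneg (t * U - 2 * ν * η * ((n : ℝ) * α)))]
  · rw [hR]
    nlinarith [mul_nonneg (mul_nonneg hν.le (sub_nonneg.2 hn2)) (sq_nonneg α), mul_nonneg hν.le (sq_nonneg t)]
end

section
/- For every δ > 0 there exists a constant C₂(δ) > 0 such that for all t ≥ 0: ∫_0^t e^{−δs} / ( √(t−s) (1 + √(t−s)) ) ds ≤ C₂(δ)/(1+t). -/
/-!
Since `1 + t ≤ (1 + s) (1 + (t - s))`, the weight `1 + t` can be shared between the source and
the kernel: `e^{-δs} (1 + s) ≲ e^{-δs/2}` and `(1 + u) / (√u (1 + √u)) ≤ 1 + u^{-1/2}`.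
It remains to bound `∫₀ᵗ e^{-cs} (1 + (t - s)^{-1/2}) ds` uniformly in `t`: where `t - s ≥ 1`
the singular factor is at most `1`, and where `t - s < 1` the source is at most `e^c e^{-ct}`,
while `e^{-ct} ∫₀ᵗ (t - s)^{-1/2} ds = 2 √t e^{-ct}` stays bounded.
-/

open Real Set MeasureTheory intervalIntegral

theorem intervalIntegral.integral_mono_on_of_nonneg {μ : Measure ℝ} {f g : ℝ → ℝ} {a b : ℝ}
    (hab : a ≤ b) (hf : ∀ x ∈ Icc a b, 0 ≤ f x) (hg : IntervalIntegrable g μ a b)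
    (h : ∀ x ∈ Icc a b, f x ≤ g x) : ∫ x in a..b, f x ∂μ ≤ ∫ x in a..b, g x ∂μ := by
  rw [integral_of_le hab, integral_of_le hab]
  exact integral_mono_of_nonneg
    (ae_restrict_of_forall_mem measurableSet_Ioc fun x hx => hf x (Ioc_subset_Icc_self hx)) hg.1
    (ae_restrict_of_forall_mem measurableSet_Ioc fun x hx => h x (Ioc_subset_Icc_self hx))

theorem exp_neg_mul_mul_one_add_le {c s : ℝ} (hc : 0 < c) (hs : 0 ≤ s) :
    exp (-(c * s)) * (1 + s) ≤ 1 + 1 / c := by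
  rw [exp_neg, inv_mul_le_iff₀ (exp_pos _), mul_comm]
  calc 1 + s ≤ (1 + 1 / c) * (c * s + 1) := by
        field_simp
        nlinarith [mul_nonneg hs (sq_nonneg c)]
    _ ≤ (1 + 1 / c) * exp (c * s) := by
        gcongr
        exact add_one_le_exp _

theorem one_add_div_sqrt_mul_one_add_sqrt_le {u : ℝ} (hu : 0 ≤ u) :
    (1 + u) / (√u * (1 + √u)) ≤ 1 + u ^ (-(1 / 2) : ℝ) := by
  rcases hu.eq_or_lt with rfl | hu
  · simp
  have hr : 0 < √u := sqrt_pos.2 hu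
  rw [rpow_neg hu.le, ← sqrt_eq_rpow, div_le_iff₀ (by positivity)]
  nth_rewrite 1 [← sq_sqrt hu.le]
  field_simp
  nlinarith

theorem exp_neg_mul_mul_rpow_le {c p s t : ℝ} (hc : 0 < c) (hp : p ≤ 0) (hst : s ≤ t) :
    exp (-(c * s)) * (t - s) ^ p ≤ exp (-(c * s)) + exp c * exp (-(c * t)) * (t - s) ^ p := by
  have hE := exp_pos (-(c * s))
  have hR : 0 ≤ (t - s) ^ p := rpow_nonneg (by linarith) _
  rcases le_or_gt 1 (t - s) with h | h
  · have : (t - s) ^ p ≤ 1 := rpow_le_one_of_one_le_of_nonpos h hp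
    nlinarith [mul_nonneg (mul_nonneg (exp_pos c).le (exp_pos (-(c * t))).le) hR]
  · have : exp (-(c * s)) ≤ exp c * exp (-(c * t)) := by
      rw [← exp_add]; exact exp_le_exp.2 (by nlinarith)
    nlinarith

theorem intervalIntegrable_sub_rpow {p : ℝ} (hp : -1 < p) (t : ℝ) :
    IntervalIntegrable (fun s => (t - s) ^ p) volume 0 t := by
  simpa using (intervalIntegrable_rpow' (a := t) (b := 0) hp).comp_sub_left t

theorem integral_sub_rpow_neg_half (t : ℝ) :
    ∫ s in (0 : ℝ)..t, (t - s) ^ (-(1 / 2) : ℝ) = 2 * √t := by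
  rw [integral_comp_sub_left (fun x => x ^ (-(1 / 2) : ℝ)) t, sub_self, sub_zero,
    integral_rpow (Or.inl (by norm_num)), zero_rpow (by norm_num), sqrt_eq_rpow]
  norm_num
  ring

theorem integral_exp_neg_mul (c t : ℝ) (hc : c ≠ 0) :
    ∫ s in (0 : ℝ)..t, exp (-(c * s)) = c⁻¹ * (1 - exp (-(c * t))) := by
  simpa using integral_comp_mul_left (a := 0) (b := t) (fun x => exp (-x)) hc

theorem intervalIntegrable_exp_neg_mul_mul_one_add_rpow (c t : ℝ) :
    IntervalIntegrable (fun s => exp (-(c * s)) * (1 + (t - s) ^ (-(1 / 2) : ℝ))) volume 0 t := by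
  have hcont : Continuous fun s => exp (-(c * s)) := by fun_prop
  simpa only [mul_add, mul_one] using (hcont.intervalIntegrable 0 t).add
    ((intervalIntegrable_sub_rpow (by norm_num) t).continuousOn_mul hcont.continuousOn)

theorem integral_exp_neg_mul_mul_one_add_rpow_le {c t : ℝ} (hc : 0 < c) (ht : 0 ≤ t) :
    ∫ s in (0 : ℝ)..t, exp (-(c * s)) * (1 + (t - s) ^ (-(1 / 2) : ℝ)) ≤
      2 / c + exp c * (1 + 1 / c) := by
  have hE : IntervalIntegrable (fun s => exp (-(c * s))) volume 0 t :=
    (by fun_prop : Continuous fun s => exp (-(c * s))).intervalIntegrable 0 t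
  have hR := intervalIntegrable_sub_rpow (p := -(1 / 2)) (by norm_num) t
  calc ∫ s in (0 : ℝ)..t, exp (-(c * s)) * (1 + (t - s) ^ (-(1 / 2) : ℝ))
      ≤ ∫ s in (0 : ℝ)..t, (2 * exp (-(c * s)) +
          exp c * exp (-(c * t)) * (t - s) ^ (-(1 / 2) : ℝ)) := by
        refine integral_mono_on ht (intervalIntegrable_exp_neg_mul_mul_one_add_rpow c t)
          ((hE.const_mul 2).add (hR.const_mul _)) fun s hs => ?_
        linarith [exp_neg_mul_mul_rpow_le hc (by norm_num : -(1 / 2 : ℝ) ≤ 0) hs.2]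
    _ = 2 * (c⁻¹ * (1 - exp (-(c * t)))) + exp c * (exp (-(c * t)) * (2 * √t)) := by
        rw [integral_add (hE.const_mul 2) (hR.const_mul _), intervalIntegral.integral_const_mul,
          intervalIntegral.integral_const_mul, integral_exp_neg_mul c t hc.ne',
          integral_sub_rpow_neg_half]
        ring
    _ ≤ 2 / c + exp c * (1 + 1 / c) := by
        have hexp : c⁻¹ * (1 - exp (-(c * t))) ≤ c⁻¹ :=
          mul_le_of_le_one_right (by positivity) (by linarith [exp_pos (-(c * t))])
        have hsqrt : 2 * √t ≤ 1 + t := by nlinarith [sq_sqrt ht, sq_nonneg (√t - 1)]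
        have := (mul_le_mul_of_nonneg_left hsqrt (exp_pos (-(c * t))).le).trans
          (exp_neg_mul_mul_one_add_le hc ht)
        rw [div_eq_mul_inv]
        gcongr

theorem one_add_mul_exp_neg_mul_div_le {δ s t : ℝ} (hδ : 0 < δ) (hs : 0 ≤ s) (hst : s ≤ t) :
    (1 + t) * (exp (-δ * s) / (√(t - s) * (1 + √(t - s)))) ≤
      (1 + 1 / (δ / 2)) * (exp (-(δ / 2 * s)) * (1 + (t - s) ^ (-(1 / 2) : ℝ))) := by
  have hu : 0 ≤ t - s := by linarith
  have hsplit : exp (-δ * s) = exp (-(δ / 2 * s)) * exp (-(δ / 2 * s)) := by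
    rw [← exp_add]; ring_nf
  calc (1 + t) * (exp (-δ * s) / (√(t - s) * (1 + √(t - s))))
      ≤ (1 + s) * (1 + (t - s)) * (exp (-δ * s) / (√(t - s) * (1 + √(t - s)))) := by
        gcongr; nlinarith
    _ = exp (-(δ / 2 * s)) * (exp (-(δ / 2 * s)) * (1 + s)) *
          ((1 + (t - s)) / (√(t - s) * (1 + √(t - s)))) := by
        rw [hsplit]; ring
    _ ≤ exp (-(δ / 2 * s)) * (1 + 1 / (δ / 2)) * (1 + (t - s) ^ (-(1 / 2) : ℝ)) := by
        gcongr
        · exact exp_neg_mul_mul_one_add_le (by positivity) hs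
        · exact one_add_div_sqrt_mul_one_add_sqrt_le hu
    _ = _ := by ring

/-- Convolving the heat-type decay factor `1/(√(t-s)(1+√(t-s)))` with an
exponentially decaying source produces decay like `1/(1+t)`. -/
theorem stmt_13 (δ : ℝ) (hδ : 0 < δ) :
    ∃ C : ℝ, 0 < C ∧ ∀ t : ℝ, 0 ≤ t →
      (∫ s in (0:ℝ)..t,
        Real.exp (-δ * s) / (Real.sqrt (t - s) * (1 + Real.sqrt (t - s)))) ≤
        C / (1 + t) := by
  have hc : 0 < δ / 2 := by positivity
  refine ⟨(1 + 1 / (δ / 2)) * (2 / (δ / 2) + exp (δ / 2) * (1 + 1 / (δ / 2))), by positivity,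
    fun t ht => ?_⟩
  rw [le_div_iff₀' (by linarith), ← intervalIntegral.integral_const_mul]
  calc ∫ s in (0 : ℝ)..t, (1 + t) * (exp (-δ * s) / (√(t - s) * (1 + √(t - s))))
      ≤ ∫ s in (0 : ℝ)..t,
          (1 + 1 / (δ / 2)) * (exp (-(δ / 2 * s)) * (1 + (t - s) ^ (-(1 / 2) : ℝ))) := by
        refine integral_mono_on_of_nonneg ht (fun s hs => ?_) ?_
          fun s hs => one_add_mul_exp_neg_mul_div_le hδ hs.1 hs.2
        · have : 0 ≤ t - s := by linarith [hs.2]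
          positivity
        · exact (intervalIntegrable_exp_neg_mul_mul_one_add_rpow _ t).const_mul _
    _ ≤ _ := by
        rw [intervalIntegral.integral_const_mul]
        gcongr
        exact integral_exp_neg_mul_mul_one_add_rpow_le hc ht
end

section
/- There exists a constant K > 0 such that for all t ≥ 0: ∫_0^t (1+t) / ( √(t−s) (1 + √(t−s)) (1+s)² ) ds ≤ K. -/
open MeasureTheory Set Real

/-!
The integrand is dominated on `0 < s < t` by `2 / (1 + s)² + 4 / ((1 + t) √(t - s))`:
when `1 + t ≤ 2 (1 + s)` the weight `1 + t` cancels against `(1 + s)²` and the heat factor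
is at worst `1 / √(t - s)`; otherwise `t - s > 1 + s`, so `1 + t < 2 (t - s)` cancels against
`√(t - s) (1 + √(t - s)) ≥ t - s`. The two majorants integrate to `2 - 2 / (1 + t)` and
`8 √t / (1 + t) ≤ 4`.
-/

lemma intervalIntegral.integral_le_of_nonneg_of_le_Ioo {f g : ℝ → ℝ} {a b : ℝ} (hab : a ≤ b)
    (hg : IntervalIntegrable g volume a b) (hf : ∀ x ∈ Ioo a b, 0 ≤ f x)
    (hfg : ∀ x ∈ Ioo a b, f x ≤ g x) :
    ∫ x in a..b, f x ≤ ∫ x in a..b, g x := by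
  simp only [intervalIntegral.integral_of_le hab, integral_Ioc_eq_integral_Ioo]
  exact integral_mono_of_nonneg ((ae_restrict_mem measurableSet_Ioo).mono hf)
    (hg.1.mono_set Ioo_subset_Ioc_self) ((ae_restrict_mem measurableSet_Ioo).mono hfg)

lemma inv_sqrt_sub_eqOn_rpow {a b : ℝ} (hab : a ≤ b) :
    EqOn (fun s => (√(b - s))⁻¹) (fun s => (b - s) ^ (-(1 / 2) : ℝ)) (uIcc a b) := by
  intro s hs
  rw [uIcc_of_le hab] at hs
  simp only [sqrt_eq_rpow, rpow_neg (sub_nonneg.2 hs.2)]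

lemma intervalIntegrable_inv_sqrt_sub {a b : ℝ} (hab : a ≤ b) :
    IntervalIntegrable (fun s => (√(b - s))⁻¹) volume a b := by
  refine (intervalIntegrable_congr ((inv_sqrt_sub_eqOn_rpow hab).mono uIoc_subset_uIcc)).2 ?_
  simpa using (intervalIntegral.intervalIntegrable_rpow' (a := b - a) (b := b - b)
    (r := -(1 / 2)) (by norm_num)).comp_sub_left b

lemma integral_inv_sqrt_sub {a b : ℝ} (hab : a ≤ b) :
    ∫ s in a..b, (√(b - s))⁻¹ = 2 * √(b - a) := by
  rw [intervalIntegral.integral_congr (inv_sqrt_sub_eqOn_rpow hab),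
    intervalIntegral.integral_comp_sub_left (fun x => x ^ (-(1 / 2) : ℝ)) b, sub_self,
    integral_rpow (Or.inl (by norm_num)), zero_rpow (by norm_num), sqrt_eq_rpow]
  norm_num
  ring

lemma intervalIntegrable_inv_sq_one_add {t : ℝ} (ht : 0 ≤ t) :
    IntervalIntegrable (fun s => ((1 + s) ^ 2)⁻¹) volume 0 t := by
  refine intervalIntegral.intervalIntegrable_inv (fun s hs => ?_) (by fun_prop)
  rw [uIcc_of_le ht] at hs
  have : 0 < 1 + s := by linarith [hs.1]
  positivity

lemma integral_inv_sq_one_add {t : ℝ} (ht : 0 ≤ t) :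
    ∫ s in (0 : ℝ)..t, ((1 + s) ^ 2)⁻¹ = 1 - (1 + t)⁻¹ := by
  have hzero : (0 : ℝ) ∉ uIcc 1 (1 + t) := by
    rw [uIcc_of_le (by linarith)]
    exact fun h => by linarith [h.1]
  have h := integral_zpow (n := -2) (Or.inr ⟨by norm_num, hzero⟩)
  rw [intervalIntegral.integral_comp_add_left (fun x => (x ^ 2)⁻¹), add_zero]
  simp only [zpow_neg, zpow_ofNat] at h
  rw [h]
  norm_num
  ring

lemma convolution_integrand_le {s t : ℝ} (hs : 0 ≤ s) (hst : s < t) :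
    (1 + t) / (√(t - s) * (1 + √(t - s)) * (1 + s) ^ 2)
      ≤ 2 * ((1 + s) ^ 2)⁻¹ + 4 / (1 + t) * (√(t - s))⁻¹ := by
  set r := √(t - s)
  have hr : 0 < r := sqrt_pos.2 (sub_pos.2 hst)
  have hr2 : r ^ 2 = t - s := sq_sqrt (sub_nonneg.2 hst.le)
  have hs1 : 0 < 1 + s := by linarith
  have ht1 : 0 < 1 + t := by linarith
  rcases le_or_gt (1 + t) (2 * (1 + s)) with hnear | hfar
  · calc (1 + t) / (r * (1 + r) * (1 + s) ^ 2) ≤ (1 + t) / (r * (1 + s) ^ 2) := by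
          gcongr
          nlinarith
      _ ≤ 4 / (1 + t) * r⁻¹ := by
          have hsq : (1 + t) ^ 2 ≤ (2 * (1 + s)) ^ 2 := pow_le_pow_left₀ ht1.le hnear 2
          rw [← div_eq_mul_inv, div_div, div_le_div_iff₀ (by positivity) (by positivity)]
          nlinarith [mul_le_mul_of_nonneg_right hsq hr.le]
      _ ≤ _ := le_add_of_nonneg_left (by positivity)
  · calc (1 + t) / (r * (1 + r) * (1 + s) ^ 2) ≤ (1 + t) / (r ^ 2 * (1 + s) ^ 2) := by
          gcongr
          nlinarith
      _ ≤ 2 * ((1 + s) ^ 2)⁻¹ := by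
          rw [hr2, ← div_eq_mul_inv, div_le_div_iff₀ (by nlinarith) (by positivity)]
          nlinarith
      _ ≤ _ := le_add_of_nonneg_right (by positivity)

/-- Uniform bound for the convolution of the heat-type decay factor
`1/(√(t-s)(1+√(t-s)))` with a source decaying like `(1+s)^{-2}`, weighted by `1+t`. -/
theorem stmt_14 :
    ∃ K : ℝ, 0 < K ∧ ∀ t : ℝ, 0 ≤ t →
      (∫ s in (0:ℝ)..t,
        (1 + t) / (Real.sqrt (t - s) * (1 + Real.sqrt (t - s)) * (1 + s) ^ 2)) ≤ K := by
  refine ⟨6, by norm_num, fun t ht => ?_⟩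
  have hmajorant : IntervalIntegrable (fun s => 2 * ((1 + s) ^ 2)⁻¹) volume 0 t :=
    (intervalIntegrable_inv_sq_one_add ht).const_mul 2
  have hsingular : IntervalIntegrable (fun s => 4 / (1 + t) * (√(t - s))⁻¹) volume 0 t :=
    (intervalIntegrable_inv_sqrt_sub ht).const_mul _
  have hamgm : 2 * √t ≤ 1 + t := by nlinarith [sq_sqrt ht, sq_nonneg (√t - 1)]
  calc _ ≤ ∫ s in (0 : ℝ)..t, (2 * ((1 + s) ^ 2)⁻¹ + 4 / (1 + t) * (√(t - s))⁻¹) :=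
        intervalIntegral.integral_le_of_nonneg_of_le_Ioo ht (hmajorant.add hsingular)
          (fun s hs => by have := sqrt_nonneg (t - s); have := hs.1; positivity)
          (fun s hs => convolution_integrand_le hs.1.le hs.2)
    _ = 2 * (1 - (1 + t)⁻¹) + 4 / (1 + t) * (2 * √t) := by
        rw [intervalIntegral.integral_add hmajorant hsingular, intervalIntegral.integral_const_mul,
          intervalIntegral.integral_const_mul, integral_inv_sq_one_add ht,
          integral_inv_sqrt_sub ht, sub_zero]
    _ ≤ 6 := by
        have ht1 : 0 < 1 + t := by linarith
        have : 4 / (1 + t) * (2 * √t) ≤ 4 := by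
          rw [div_mul_eq_mul_div, div_le_iff₀ ht1]; linarith
        have : 0 ≤ (1 + t)⁻¹ := by positivity
        linarith
end

section
/- Let a, b : ℤ → ℝ be functions with nonnegative values such that a(0) = 0, the family (p² a(p)²)_{p ∈ ℤ} is summable, and the family (b(q)²)_{q ∈ ℤ} is summable. For each n ∈ ℤ the family (a(p) b(n−p))_{p ∈ ℤ} is summable; set c(n) = Σ_{p ∈ ℤ} a(p) b(n−p). Then the family (c(n)²)_{n ∈ ℤ} is summable and Σ_{n ∈ ℤ} c(n)² ≤ (π²/3) · ( Σ_{p ∈ ℤ} p² a(p)² ) · ( Σ_{q ∈ ℤ} b(q)² ). -/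
/-!
Since `a 0 = 0`, each term of `c n = ∑ p, a p * b (n - p)` factors as
`p⁻¹ * (p * a p * b (n - p))`, and Cauchy–Schwarz gives
`c n ^ 2 ≤ (∑_{p ≠ 0} p⁻²) * ∑ p, p² a(p)² b(n - p)²` with `∑_{p ≠ 0} p⁻² = π² / 3`.
Summed over `n`, the right-hand side is a convolution of two nonnegative summable families,
whose sum factors as `(∑ p, p² a(p)²) * ∑ q, b(q)²`.
-/

open Real

lemma summable_mul_and_sq_tsum_mul_le {ι : Type*} {u v : ι → ℝ} (hu : ∀ i, 0 ≤ u i)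
    (hv : ∀ i, 0 ≤ v i) (hu2 : Summable fun i => u i ^ 2) (hv2 : Summable fun i => v i ^ 2) :
    Summable (fun i => u i * v i) ∧
      (∑' i, u i * v i) ^ 2 ≤ (∑' i, u i ^ 2) * ∑' i, v i ^ 2 := by
  obtain ⟨hsum, hle⟩ := Real.summable_and_inner_le_Lp_mul_Lq_tsum_of_nonneg
    Real.HolderConjugate.two_two hu hv (by simpa only [rpow_two] using hu2)
    (by simpa only [rpow_two] using hv2)
  simp only [rpow_two, ← sqrt_eq_rpow] at hle
  refine ⟨hsum, ?_⟩
  calc (∑' i, u i * v i) ^ 2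
      ≤ (√(∑' i, u i ^ 2) * √(∑' i, v i ^ 2)) ^ 2 := by
        gcongr
        exact tsum_nonneg fun i => mul_nonneg (hu i) (hv i)
    _ = (∑' i, u i ^ 2) * ∑' i, v i ^ 2 := by
        rw [mul_pow, sq_sqrt (tsum_nonneg fun i => sq_nonneg _),
          sq_sqrt (tsum_nonneg fun i => sq_nonneg _)]

lemma summable_and_sq_tsum_le_tsum_inv_sq_mul_tsum {ι : Type*} {f w : ι → ℝ} (hf : ∀ i, 0 ≤ f i)
    (hw : ∀ i, w i = 0 → f i = 0) (hw2 : Summable fun i => (w i ^ 2)⁻¹)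
    (hwf : Summable fun i => w i ^ 2 * f i ^ 2) :
    Summable f ∧ (∑' i, f i) ^ 2 ≤ (∑' i, (w i ^ 2)⁻¹) * ∑' i, w i ^ 2 * f i ^ 2 := by
  have hsplit : ∀ i, |w i|⁻¹ * (|w i| * f i) = f i := fun i => by
    by_cases hwi : w i = 0
    · simp [hwi, hw i hwi]
    · rw [← mul_assoc, inv_mul_cancel₀ (abs_ne_zero.2 hwi), one_mul]
  have hu2 : ∀ i, (|w i|⁻¹) ^ 2 = (w i ^ 2)⁻¹ := fun i => by rw [inv_pow, sq_abs]
  have hv2 : ∀ i, (|w i| * f i) ^ 2 = w i ^ 2 * f i ^ 2 := fun i => by rw [mul_pow, sq_abs]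
  have h := summable_mul_and_sq_tsum_mul_le (u := fun i => |w i|⁻¹) (v := fun i => |w i| * f i)
    (fun i => inv_nonneg.2 (abs_nonneg _)) (fun i => mul_nonneg (abs_nonneg _) (hf i))
    (by simpa only [hu2] using hw2) (by simpa only [hv2] using hwf)
  simpa only [hsplit, hu2, hv2] using h

/-- The `p = 0` term is `0⁻¹ = 0`, so this is `∑_{p ≠ 0} p⁻² = 2 ζ(2)`. -/
lemma hasSum_int_inv_sq : HasSum (fun p : ℤ => ((p : ℝ) ^ 2)⁻¹) (π ^ 2 / 3) := by
  have hnat : HasSum (fun n : ℕ => (((n : ℤ) : ℝ) ^ 2)⁻¹) (π ^ 2 / 6) := by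
    simpa only [Int.cast_natCast, one_div] using hasSum_zeta_two
  have hneg : HasSum (fun n : ℕ => (((-n : ℤ) : ℝ) ^ 2)⁻¹) (π ^ 2 / 6) := by
    simpa only [Int.cast_neg, neg_sq] using hnat
  have h := HasSum.of_nat_of_neg (f := fun p : ℤ => ((p : ℝ) ^ 2)⁻¹) hnat hneg
  rwa [Int.cast_zero, zero_pow two_ne_zero, inv_zero, sub_zero,
    show π ^ 2 / 6 + π ^ 2 / 6 = π ^ 2 / 3 by ring] at h

lemma hasSum_tsum_mul_sub_of_nonneg {G : Type*} [AddCommGroup G] {f g : G → ℝ}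
    (hf0 : ∀ p, 0 ≤ f p) (hg0 : ∀ q, 0 ≤ g q) (hf : Summable f) (hg : Summable g) :
    (∀ n, Summable fun p => f p * g (n - p)) ∧
      HasSum (fun n => ∑' p, f p * g (n - p)) ((∑' p, f p) * ∑' q, g q) := by
  have hprod : HasSum (fun x : G × G => f x.1 * g x.2) ((∑' p, f p) * ∑' q, g q) :=
    hf.hasSum.mul hg.hasSum (hf.mul_of_nonneg hg hf0 hg0)
  let e : G × G ≃ G × G :=
    (Equiv.prodComm G G).trans (Equiv.prodShear (Equiv.refl G) Equiv.subRight)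
  have hconv : HasSum (fun x : G × G => f x.2 * g (x.1 - x.2)) ((∑' p, f p) * ∑' q, g q) :=
    e.hasSum_iff.2 hprod
  have hfiber : ∀ n, Summable fun p => f p * g (n - p) := hconv.summable.prod_factor
  exact ⟨hfiber, hconv.prod_fiberwise fun n => (hfiber n).hasSum⟩

/-- Discrete convolution estimate: if `(p a(p))_p ∈ ℓ²`, `a(0) = 0`, and `b ∈ ℓ²`,
then the convolution `c(n) = Σ_p a(p) b(n-p)` is well defined, `c ∈ ℓ²`, and
`Σ c(n)² ≤ (π²/3) (Σ p² a(p)²) (Σ b(q)²)`. -/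
theorem stmt_15 (a b : ℤ → ℝ) (ha : ∀ p, 0 ≤ a p) (hb : ∀ q, 0 ≤ b q)
    (ha0 : a 0 = 0)
    (hsa : Summable fun p : ℤ => (p : ℝ) ^ 2 * a p ^ 2)
    (hsb : Summable fun q : ℤ => b q ^ 2) :
    (∀ n : ℤ, Summable fun p : ℤ => a p * b (n - p)) ∧
    (Summable fun n : ℤ => (∑' p : ℤ, a p * b (n - p)) ^ 2) ∧
    (∑' n : ℤ, (∑' p : ℤ, a p * b (n - p)) ^ 2) ≤
      (π ^ 2 / 3) * (∑' p : ℤ, (p : ℝ) ^ 2 * a p ^ 2) * (∑' q : ℤ, b q ^ 2) := by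
  obtain ⟨hfiber, hT⟩ := hasSum_tsum_mul_sub_of_nonneg (fun p => by positivity)
    (fun q => sq_nonneg (b q)) hsa hsb
  have hpointwise : ∀ n : ℤ, Summable (fun p => a p * b (n - p)) ∧
      (∑' p, a p * b (n - p)) ^ 2 ≤
        π ^ 2 / 3 * ∑' p : ℤ, (p : ℝ) ^ 2 * a p ^ 2 * b (n - p) ^ 2 := fun n => by
    have h := summable_and_sq_tsum_le_tsum_inv_sq_mul_tsum (w := fun p : ℤ => (p : ℝ))
      (fun p => mul_nonneg (ha p) (hb (n - p)))
      (fun p hp => by simp [Int.cast_eq_zero.1 hp, ha0]) hasSum_int_inv_sq.summable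
      (by simpa only [mul_pow, mul_assoc] using hfiber n)
    simpa only [hasSum_int_inv_sq.tsum_eq, mul_pow, mul_assoc] using h
  have hc2 : Summable fun n : ℤ => (∑' p : ℤ, a p * b (n - p)) ^ 2 :=
    .of_nonneg_of_le (fun n => sq_nonneg _) (fun n => (hpointwise n).2) (hT.summable.mul_left _)
  refine ⟨fun n => (hpointwise n).1, hc2, ?_⟩
  calc (∑' n : ℤ, (∑' p : ℤ, a p * b (n - p)) ^ 2)
      ≤ ∑' n : ℤ, π ^ 2 / 3 * ∑' p : ℤ, (p : ℝ) ^ 2 * a p ^ 2 * b (n - p) ^ 2 :=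
        hc2.tsum_le_tsum (fun n => (hpointwise n).2) (hT.summable.mul_left _)
    _ = _ := by rw [tsum_mul_left, hT.tsum_eq, mul_assoc]
end

section
/- Let α > 0, let η satisfy 0 < η < α/2, and let M ≥ 0. There exists a constant c > 0 depending only on α and η such that for every integer n ≥ 1 and all continuous functions uˣ, uʸ : [0,∞) → ℂ with |uˣ(y)| ≤ M e^{−ηy} and |uʸ(y)| ≤ M e^{−ηy} for all y ≥ 0, the function φ(y) = (1/2) ∫_0^y (uʸ − i uˣ)(τ) e^{nα(τ−y)} dτ − (1/2) ∫_y^∞ (uʸ + i uˣ)(τ) e^{nα(y−τ)} dτ − (1/2) ∫_0^∞ (uʸ + i uˣ)(τ) e^{−nα(τ+y)} dτ is continuously differentiable and satisfies |φ(y)| e^{ηy} ≤ c M / n and |φ'(y)| e^{ηy} ≤ c M for all y ≥ 0. -/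
open MeasureTheory Set

/-!
With `k = nα`, the first two integrals defining `φ` are the exponential convolutions
`L f y = e^{-ky} ∫₀^y f(τ) e^{kτ} dτ` and `R g y = e^{ky} ∫_y^∞ g(τ) e^{-kτ} dτ`, and the third is
`e^{-ky} R g 0`. Against data of size `A e^{-ητ}` one has `|L f y| ≤ A e^{-ηy}/(k-η)` and
`|R g y| ≤ A e^{-ηy}/(k+η)`, both `O(A e^{-ηy}/k)` because `η < k/2`; this gives the `1/n` in the
bound for `φ`. Since `L' = f - kL` and `R' = kR - g`, the factor `k` cancels in `φ'`.
The data are only given on `[0, ∞)`; extending them by `u (max τ 0)` makes every integrand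
continuous on `ℝ`, so that `φ` can be differentiated at the boundary point `y = 0`.
-/

theorem ContinuousOn.continuous_comp_max {E : Type*} [TopologicalSpace E] {u : ℝ → E} {a : ℝ}
    (hu : ContinuousOn u (Ici a)) : Continuous fun x => u (max x a) :=
  hu.comp_continuous (continuous_id.max continuous_const) fun x => le_max_right x a

theorem eqOn_comp_max {E : Type*} (u : ℝ → E) (a : ℝ) : EqOn (fun x => u (max x a)) u (Ici a) :=
  fun x hx => by simp only [max_eq_left (mem_Ici.1 hx)]

theorem hasDerivAt_cexp_ofReal_mul (c y : ℝ) :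
    HasDerivAt (fun x : ℝ => Complex.exp ((c * x : ℝ) : ℂ))
      (c * Complex.exp ((c * y : ℝ) : ℂ)) y := by
  simpa [mul_comm] using ((hasDerivAt_id y).const_mul c).ofReal_comp.cexp

theorem cexp_ofReal_mul_mul_neg (c y : ℝ) :
    Complex.exp ((c * y : ℝ) : ℂ) * Complex.exp ((-c * y : ℝ) : ℂ) = 1 := by
  rw [← Complex.exp_add, ← Complex.ofReal_add, neg_mul, add_neg_cancel, Complex.ofReal_zero,
    Complex.exp_zero]

noncomputable def expConvBelow (k : ℝ) (f : ℝ → ℂ) (y : ℝ) : ℂ :=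
  ∫ τ in (0:ℝ)..y, f τ * Complex.exp ((k * (τ - y) : ℝ) : ℂ)

noncomputable def expConvAbove (k : ℝ) (g : ℝ → ℂ) (y : ℝ) : ℂ :=
  ∫ τ in Ioi y, g τ * Complex.exp ((k * (y - τ) : ℝ) : ℂ)

theorem expConvBelow_eq_mul (k : ℝ) (f : ℝ → ℂ) (y : ℝ) :
    expConvBelow k f y =
      Complex.exp ((-k * y : ℝ) : ℂ) * ∫ τ in (0:ℝ)..y, f τ * Complex.exp ((k * τ : ℝ) : ℂ) := by
  rw [expConvBelow, ← intervalIntegral.integral_const_mul]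
  congr 1 with τ
  rw [mul_left_comm, ← Complex.exp_add, ← Complex.ofReal_add]
  ring_nf

theorem expConvAbove_eq_mul (k : ℝ) (g : ℝ → ℂ) (y : ℝ) :
    expConvAbove k g y =
      Complex.exp ((k * y : ℝ) : ℂ) * ∫ τ in Ioi y, g τ * Complex.exp ((-k * τ : ℝ) : ℂ) := by
  rw [expConvAbove, ← integral_const_mul]
  congr 1 with τ
  rw [mul_left_comm, ← Complex.exp_add, ← Complex.ofReal_add]
  ring_nf

section ExpConv

variable {k η A : ℝ} {f g : ℝ → ℂ}

theorem hasDerivAt_expConvBelow (hf : Continuous f) (y : ℝ) :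
    HasDerivAt (expConvBelow k f) (f y - k * expConvBelow k f y) y := by
  have hI : HasDerivAt (fun y => ∫ τ in (0:ℝ)..y, f τ * Complex.exp ((k * τ : ℝ) : ℂ))
      (f y * Complex.exp ((k * y : ℝ) : ℂ)) y :=
    ((hf.mul (by fun_prop)).integral_hasStrictDerivAt 0 y).hasDerivAt
  rw [funext (expConvBelow_eq_mul k f)]
  refine ((hasDerivAt_cexp_ofReal_mul (-k) y).mul hI).congr_deriv ?_
  simp only [Complex.ofReal_neg]
  linear_combination (f y) * cexp_ofReal_mul_mul_neg k y

theorem hasDerivAt_expConvAbove (hg : Continuous g)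
    (hint : IntegrableOn (fun τ => g τ * Complex.exp ((-k * τ : ℝ) : ℂ)) (Ioi 0)) (y : ℝ) :
    HasDerivAt (expConvAbove k g) (k * expConvAbove k g y - g y) y := by
  have hG : Continuous fun τ => g τ * Complex.exp ((-k * τ : ℝ) : ℂ) := hg.mul (by fun_prop)
  have htail : (fun y => ∫ τ in Ioi y, g τ * Complex.exp ((-k * τ : ℝ) : ℂ)) = fun y =>
      (∫ τ in Ioi 0, g τ * Complex.exp ((-k * τ : ℝ) : ℂ))
        - ∫ τ in (0:ℝ)..y, g τ * Complex.exp ((-k * τ : ℝ) : ℂ) := by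
    funext y
    rw [← intervalIntegral.integral_interval_add_Ioi' (hG.intervalIntegrable y 0) hint,
      intervalIntegral.integral_symm y 0]
    ring
  have hT := ((hG.integral_hasStrictDerivAt 0 y).hasDerivAt).const_sub
    (∫ τ in Ioi 0, g τ * Complex.exp ((-k * τ : ℝ) : ℂ))
  rw [← htail] at hT
  rw [funext (expConvAbove_eq_mul k g)]
  refine ((hasDerivAt_cexp_ofReal_mul k y).mul hT).congr_deriv ?_
  linear_combination -(g y) * cexp_ofReal_mul_mul_neg k y

theorem expConvBelow_congr {f' : ℝ → ℂ} (h : EqOn f f' (Ici 0)) {y : ℝ} (hy : 0 ≤ y) :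
    expConvBelow k f y = expConvBelow k f' y :=
  intervalIntegral.integral_congr fun τ hτ => by
    rw [uIcc_of_le hy] at hτ
    simp only [h hτ.1]

theorem expConvAbove_congr {g' : ℝ → ℂ} (h : EqOn g g' (Ici 0)) {y : ℝ} (hy : 0 ≤ y) :
    expConvAbove k g y = expConvAbove k g' y :=
  setIntegral_congr_fun measurableSet_Ioi fun τ hτ => by
    simp only [h (mem_Ici.2 (hy.trans (le_of_lt hτ)))]

theorem integrableOn_Ioi_mul_cexp_neg (hg : ContinuousOn g (Ici 0))
    (hgA : ∀ τ ∈ Ici (0:ℝ), ‖g τ‖ ≤ A * Real.exp (-η * τ)) (hk : 0 < η + k) :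
    IntegrableOn (fun τ => g τ * Complex.exp ((-k * τ : ℝ) : ℂ)) (Ioi 0) := by
  refine Integrable.mono' ((integrableOn_exp_mul_Ioi (neg_lt_zero.2 hk) 0).const_mul A)
    (((hg.mono Ioi_subset_Ici_self).mul (by fun_prop)).aestronglyMeasurable measurableSet_Ioi)
    ((ae_restrict_iff' measurableSet_Ioi).2 (ae_of_all _ fun τ hτ => ?_))
  rw [norm_mul, Complex.norm_exp_ofReal]
  calc ‖g τ‖ * Real.exp (-k * τ) ≤ A * Real.exp (-η * τ) * Real.exp (-k * τ) :=
        mul_le_mul_of_nonneg_right (hgA τ (mem_Ici.2 (le_of_lt hτ))) (Real.exp_pos _).le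
    _ = A * Real.exp (-(η + k) * τ) := by rw [mul_assoc, ← Real.exp_add]; ring_nf

theorem integrableOn_Ioi_comp_max_mul_cexp_neg (hg : ContinuousOn g (Ici 0))
    (hgA : ∀ τ ∈ Ici (0:ℝ), ‖g τ‖ ≤ A * Real.exp (-η * τ)) (hk : 0 < η + k) :
    IntegrableOn (fun τ => g (max τ 0) * Complex.exp ((-k * τ : ℝ) : ℂ)) (Ioi 0) :=
  (integrableOn_Ioi_mul_cexp_neg hg hgA hk).congr_fun
    (fun τ hτ => by simp only [eqOn_comp_max g 0 (Ioi_subset_Ici_self hτ)]) measurableSet_Ioi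

theorem norm_expConvBelow_mul_exp_le (hfA : ∀ τ ∈ Ici (0:ℝ), ‖f τ‖ ≤ A * Real.exp (-η * τ))
    (hηk : η < k) {y : ℝ} (hy : 0 ≤ y) :
    ‖expConvBelow k f y‖ * Real.exp (η * y) ≤ A / (k - η) := by
  have hA : 0 ≤ A := by simpa using (norm_nonneg _).trans (hfA 0 (mem_Ici.2 le_rfl))
  have hkη : 0 < k - η := sub_pos.2 hηk
  have hprim : ∀ τ ∈ uIcc 0 y, HasDerivAt
      (fun τ => A * Real.exp (-η * τ) * Real.exp (k * (τ - y)) / (k - η))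
      (A * Real.exp (-η * τ) * Real.exp (k * (τ - y))) τ := by
    intro τ _
    have h := ((((hasDerivAt_id τ).const_mul (-η)).exp.const_mul A).mul
      (((hasDerivAt_id τ).sub_const y).const_mul k).exp).div_const (k - η)
    refine h.congr_deriv ?_
    simp only [id]
    field_simp
    ring
  have hcont : Continuous fun τ => A * Real.exp (-η * τ) * Real.exp (k * (τ - y)) := by fun_prop
  have hintegral := intervalIntegral.integral_eq_sub_of_hasDerivAt hprim
    (hcont.intervalIntegrable 0 y)
  have hle : ‖expConvBelow k f y‖ ≤ A * (Real.exp (-η * y) - Real.exp (-(k * y))) / (k - η) := by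
    refine (intervalIntegral.norm_integral_le_of_norm_le hy (ae_of_all _ fun τ hτ => ?_)
      (hcont.intervalIntegrable 0 y)).trans_eq ?_
    · rw [norm_mul, Complex.norm_exp_ofReal]
      exact mul_le_mul_of_nonneg_right (hfA τ (le_of_lt hτ.1)) (Real.exp_pos _).le
    · rw [hintegral]
      simp only [sub_self, mul_zero, Real.exp_zero, mul_one, zero_sub, mul_neg]
      ring
  calc ‖expConvBelow k f y‖ * Real.exp (η * y)
      ≤ A * (Real.exp (-η * y) - Real.exp (-(k * y))) / (k - η) * Real.exp (η * y) :=
        mul_le_mul_of_nonneg_right hle (Real.exp_pos _).le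
    _ = A * (1 - Real.exp (-((k - η) * y))) / (k - η) := by
        rw [div_mul_eq_mul_div, mul_assoc, sub_mul, ← Real.exp_add, ← Real.exp_add,
          show -η * y + η * y = 0 by ring, Real.exp_zero,
          show -(k * y) + η * y = -((k - η) * y) by ring]
    _ ≤ A / (k - η) := by
        gcongr
        exact mul_le_of_le_one_right hA (by linarith [Real.exp_pos (-((k - η) * y))])

theorem norm_expConvAbove_mul_exp_le (hgA : ∀ τ ∈ Ici (0:ℝ), ‖g τ‖ ≤ A * Real.exp (-η * τ))
    (hk : 0 < η + k) {y : ℝ} (hy : 0 ≤ y) :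
    ‖expConvAbove k g y‖ * Real.exp (η * y) ≤ A / (η + k) := by
  have hbound : ∀ τ ∈ Ioi y, ‖g τ * Complex.exp ((k * (y - τ) : ℝ) : ℂ)‖
      ≤ A * Real.exp (k * y) * Real.exp (-(η + k) * τ) := by
    intro τ hτ
    rw [norm_mul, Complex.norm_exp_ofReal, mul_assoc, ← Real.exp_add]
    calc ‖g τ‖ * Real.exp (k * (y - τ))
        ≤ A * Real.exp (-η * τ) * Real.exp (k * (y - τ)) :=
          mul_le_mul_of_nonneg_right (hgA τ (hy.trans (le_of_lt hτ))) (Real.exp_pos _).le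
      _ = A * Real.exp (k * y + -(η + k) * τ) := by
          rw [mul_assoc, ← Real.exp_add]; ring_nf
  have hle := norm_integral_le_of_norm_le
    ((integrableOn_exp_mul_Ioi (neg_lt_zero.2 hk) y).const_mul (A * Real.exp (k * y)))
    ((ae_restrict_iff' measurableSet_Ioi).2 (ae_of_all _ hbound))
  rw [integral_const_mul, integral_exp_mul_Ioi (neg_lt_zero.2 hk)] at hle
  calc ‖expConvAbove k g y‖ * Real.exp (η * y)
      ≤ A * Real.exp (k * y) * (-Real.exp (-(η + k) * y) / -(η + k)) * Real.exp (η * y) :=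
        mul_le_mul_of_nonneg_right hle (Real.exp_pos _).le
    _ = A / (η + k) := by
        have hexp : Real.exp (k * y) * Real.exp (-(η + k) * y) * Real.exp (η * y) = 1 := by
          rw [← Real.exp_add, ← Real.exp_add, ← Real.exp_zero]; congr 1; ring
        rw [neg_div_neg_eq]
        linear_combination A / (η + k) * hexp

noncomputable def neumannPotential (k : ℝ) (f g : ℝ → ℂ) (y : ℝ) : ℂ :=
  (1/2) * expConvBelow k f y - (1/2) * expConvAbove k g y
    - (1/2) * (Complex.exp ((-k * y : ℝ) : ℂ) * expConvAbove k g 0)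

noncomputable def neumannPotentialDeriv (k : ℝ) (f g : ℝ → ℂ) (y : ℝ) : ℂ :=
  (1/2) * (f y + g y) - k / 2 *
    (expConvBelow k f y + expConvAbove k g y - Complex.exp ((-k * y : ℝ) : ℂ) * expConvAbove k g 0)

theorem integral_Ioi_mul_cexp_neg_add (k y : ℝ) (g : ℝ → ℂ) :
    ∫ τ in Ioi (0:ℝ), g τ * Complex.exp ((-(k * (τ + y)) : ℝ) : ℂ)
      = Complex.exp ((-k * y : ℝ) : ℂ) * expConvAbove k g 0 := by
  rw [expConvAbove, ← integral_const_mul]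
  congr 1 with τ
  rw [mul_left_comm, ← Complex.exp_add, ← Complex.ofReal_add]
  ring_nf

theorem neumannPotential_congr {f' g' : ℝ → ℂ} (hf : EqOn f f' (Ici 0)) (hg : EqOn g g' (Ici 0)) :
    EqOn (neumannPotential k f g) (neumannPotential k f' g') (Ici 0) := fun y hy => by
  simp only [neumannPotential, expConvBelow_congr hf hy, expConvAbove_congr hg hy,
    expConvAbove_congr hg le_rfl]

theorem neumannPotentialDeriv_congr {f' g' : ℝ → ℂ} (hf : EqOn f f' (Ici 0))
    (hg : EqOn g g' (Ici 0)) :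
    EqOn (neumannPotentialDeriv k f g) (neumannPotentialDeriv k f' g') (Ici 0) := fun y hy => by
  simp only [neumannPotentialDeriv, expConvBelow_congr hf hy, expConvAbove_congr hg hy,
    expConvAbove_congr hg le_rfl, hf hy, hg hy]

theorem hasDerivAt_neumannPotential (hf : Continuous f) (hg : Continuous g)
    (hint : IntegrableOn (fun τ => g τ * Complex.exp ((-k * τ : ℝ) : ℂ)) (Ioi 0)) (y : ℝ) :
    HasDerivAt (neumannPotential k f g) (neumannPotentialDeriv k f g y) y := by
  have h := (((hasDerivAt_expConvBelow (k := k) hf y).const_mul (1/2 : ℂ)).sub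
    ((hasDerivAt_expConvAbove hg hint y).const_mul (1/2 : ℂ))).sub
    (((hasDerivAt_cexp_ofReal_mul (-k) y).mul_const (expConvAbove k g 0)).const_mul (1/2 : ℂ))
  refine h.congr_deriv ?_
  simp only [neumannPotentialDeriv, Complex.ofReal_neg]
  ring

theorem continuous_neumannPotentialDeriv (hf : Continuous f) (hg : Continuous g)
    (hint : IntegrableOn (fun τ => g τ * Complex.exp ((-k * τ : ℝ) : ℂ)) (Ioi 0)) :
    Continuous (neumannPotentialDeriv k f g) := by
  have hL : Continuous (expConvBelow k f) :=
    continuous_iff_continuousAt.2 fun y => (hasDerivAt_expConvBelow (k := k) hf y).continuousAt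
  have hR : Continuous (expConvAbove k g) :=
    continuous_iff_continuousAt.2 fun y => (hasDerivAt_expConvAbove hg hint y).continuousAt
  unfold neumannPotentialDeriv
  fun_prop

theorem hasDerivWithinAt_neumannPotential (hf : ContinuousOn f (Ici 0))
    (hg : ContinuousOn g (Ici 0)) (hgA : ∀ τ ∈ Ici (0:ℝ), ‖g τ‖ ≤ A * Real.exp (-η * τ))
    (hk : 0 < η + k) {y : ℝ} (hy : y ∈ Ici 0) :
    HasDerivWithinAt (neumannPotential k f g) (neumannPotentialDeriv k f g y) (Ici 0) y := by
  have hφ := neumannPotential_congr (k := k) (eqOn_comp_max f 0) (eqOn_comp_max g 0)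
  have hD := neumannPotentialDeriv_congr (k := k) (eqOn_comp_max f 0) (eqOn_comp_max g 0)
  rw [← hD hy]
  exact ((hasDerivAt_neumannPotential hf.continuous_comp_max hg.continuous_comp_max
    (integrableOn_Ioi_comp_max_mul_cexp_neg hg hgA hk)
    y).hasDerivWithinAt).congr (fun z hz => (hφ hz).symm) (hφ hy).symm

theorem continuousOn_neumannPotentialDeriv (hf : ContinuousOn f (Ici 0))
    (hg : ContinuousOn g (Ici 0)) (hgA : ∀ τ ∈ Ici (0:ℝ), ‖g τ‖ ≤ A * Real.exp (-η * τ))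
    (hk : 0 < η + k) : ContinuousOn (neumannPotentialDeriv k f g) (Ici 0) :=
  (continuous_neumannPotentialDeriv hf.continuous_comp_max hg.continuous_comp_max
    (integrableOn_Ioi_comp_max_mul_cexp_neg hg hgA hk)).continuousOn.congr
      (neumannPotentialDeriv_congr (eqOn_comp_max f 0) (eqOn_comp_max g 0)).symm

theorem contDiffOn_neumannPotential (hf : ContinuousOn f (Ici 0))
    (hg : ContinuousOn g (Ici 0)) (hgA : ∀ τ ∈ Ici (0:ℝ), ‖g τ‖ ≤ A * Real.exp (-η * τ))
    (hk : 0 < η + k) : ContDiffOn ℝ 1 (neumannPotential k f g) (Ici 0) := by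
  have hderiv := fun y (hy : y ∈ Ici (0:ℝ)) =>
    hasDerivWithinAt_neumannPotential hf hg hgA hk hy
  refine (contDiffOn_one_iff_derivWithin (uniqueDiffOn_Ici 0)).2
    ⟨fun y hy => (hderiv y hy).differentiableWithinAt, ?_⟩
  exact (continuousOn_neumannPotentialDeriv hf hg hgA hk).congr fun y hy =>
    (hderiv y hy).derivWithin (uniqueDiffOn_Ici 0 y hy)

theorem norm_expConv_sum_mul_exp_le (hfA : ∀ τ ∈ Ici (0:ℝ), ‖f τ‖ ≤ A * Real.exp (-η * τ))
    (hgA : ∀ τ ∈ Ici (0:ℝ), ‖g τ‖ ≤ A * Real.exp (-η * τ)) (hη : 0 ≤ η) (hηk : 2 * η < k)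
    {y : ℝ} (hy : 0 ≤ y) :
    (‖expConvBelow k f y‖ + ‖expConvAbove k g y‖
      + ‖Complex.exp ((-k * y : ℝ) : ℂ) * expConvAbove k g 0‖) * Real.exp (η * y)
      ≤ 4 * A / k := by
  have hA : 0 ≤ A := by simpa using (norm_nonneg _).trans (hgA 0 (mem_Ici.2 le_rfl))
  have hk : 0 < k := by linarith
  have hbelow := norm_expConvBelow_mul_exp_le (k := k) hfA (by linarith) hy
  have habove := norm_expConvAbove_mul_exp_le (k := k) hgA (by linarith) hy
  have habove0 : ‖Complex.exp ((-k * y : ℝ) : ℂ) * expConvAbove k g 0‖ * Real.exp (η * y)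
      ≤ A / (η + k) := by
    have h0 := norm_expConvAbove_mul_exp_le (k := k) hgA (by linarith) le_rfl
    rw [mul_zero, Real.exp_zero, mul_one] at h0
    have hdecay : Real.exp (-k * y) * Real.exp (η * y) ≤ 1 := by
      rw [← Real.exp_add, Real.exp_le_one_iff]
      nlinarith
    rw [norm_mul, Complex.norm_exp_ofReal, mul_right_comm]
    exact (mul_le_of_le_one_left (norm_nonneg _) hdecay).trans h0
  have hkη : A / (k - η) ≤ 2 * A / k := by
    rw [div_le_div_iff₀ (by linarith) hk]
    nlinarith
  have hηk' : A / (η + k) ≤ A / k := div_le_div_of_nonneg_left hA hk (by linarith)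
  rw [add_mul, add_mul]
  linarith [show 2 * A / k + A / k + A / k = 4 * A / k by ring]

theorem norm_neumannPotential_mul_exp_le (hfA : ∀ τ ∈ Ici (0:ℝ), ‖f τ‖ ≤ A * Real.exp (-η * τ))
    (hgA : ∀ τ ∈ Ici (0:ℝ), ‖g τ‖ ≤ A * Real.exp (-η * τ)) (hη : 0 ≤ η) (hηk : 2 * η < k)
    {y : ℝ} (hy : 0 ≤ y) :
    ‖neumannPotential k f g y‖ * Real.exp (η * y) ≤ 2 * A / k := by
  have hle : ‖neumannPotential k f g y‖ ≤ 1 / 2 * (‖expConvBelow k f y‖ + ‖expConvAbove k g y‖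
      + ‖Complex.exp ((-k * y : ℝ) : ℂ) * expConvAbove k g 0‖) := by
    unfold neumannPotential
    refine (norm_sub_le _ _).trans ((add_le_add_left (norm_sub_le _ _) _).trans_eq ?_)
    simp only [norm_mul, norm_div, norm_one, Complex.norm_ofNat]
    ring
  calc ‖neumannPotential k f g y‖ * Real.exp (η * y)
      ≤ 1 / 2 * ((‖expConvBelow k f y‖ + ‖expConvAbove k g y‖
        + ‖Complex.exp ((-k * y : ℝ) : ℂ) * expConvAbove k g 0‖) * Real.exp (η * y)) :=
        (mul_le_mul_of_nonneg_right hle (Real.exp_pos _).le).trans_eq (by ring)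
    _ ≤ 1 / 2 * (4 * A / k) := by gcongr; exact norm_expConv_sum_mul_exp_le hfA hgA hη hηk hy
    _ = 2 * A / k := by ring

theorem norm_neumannPotentialDeriv_mul_exp_le
    (hfA : ∀ τ ∈ Ici (0:ℝ), ‖f τ‖ ≤ A * Real.exp (-η * τ))
    (hgA : ∀ τ ∈ Ici (0:ℝ), ‖g τ‖ ≤ A * Real.exp (-η * τ)) (hη : 0 ≤ η) (hηk : 2 * η < k)
    {y : ℝ} (hy : 0 ≤ y) :
    ‖neumannPotentialDeriv k f g y‖ * Real.exp (η * y) ≤ 3 * A := by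
  have hk : 0 < k := by linarith
  have hle : ‖neumannPotentialDeriv k f g y‖ ≤ 1 / 2 * (‖f y‖ + ‖g y‖) + k / 2 *
      (‖expConvBelow k f y‖ + ‖expConvAbove k g y‖
        + ‖Complex.exp ((-k * y : ℝ) : ℂ) * expConvAbove k g 0‖) := by
    unfold neumannPotentialDeriv
    refine (norm_sub_le _ _).trans (add_le_add ?_ ?_)
    · rw [norm_mul]
      simp only [norm_div, norm_one, Complex.norm_ofNat]
      gcongr
      exact norm_add_le _ _
    · rw [norm_mul, norm_div, Complex.norm_real, Real.norm_of_nonneg hk.le, Complex.norm_ofNat]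
      gcongr
      exact (norm_sub_le _ _).trans (add_le_add_left (norm_add_le _ _) _)
  have hdata : (‖f y‖ + ‖g y‖) * Real.exp (η * y) ≤ 2 * A := by
    have hcancel : Real.exp (-η * y) * Real.exp (η * y) = 1 := by
      rw [← Real.exp_add, ← Real.exp_zero]; congr 1; ring
    calc (‖f y‖ + ‖g y‖) * Real.exp (η * y)
        ≤ (A * Real.exp (-η * y) + A * Real.exp (-η * y)) * Real.exp (η * y) :=
          mul_le_mul_of_nonneg_right (add_le_add (hfA y hy) (hgA y hy)) (Real.exp_pos _).le
      _ = 2 * A := by linear_combination 2 * A * hcancel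
  have hsum := norm_expConv_sum_mul_exp_le hfA hgA hη hηk hy
  calc ‖neumannPotentialDeriv k f g y‖ * Real.exp (η * y)
      ≤ 1 / 2 * ((‖f y‖ + ‖g y‖) * Real.exp (η * y)) + k / 2 *
        ((‖expConvBelow k f y‖ + ‖expConvAbove k g y‖
        + ‖Complex.exp ((-k * y : ℝ) : ℂ) * expConvAbove k g 0‖) * Real.exp (η * y)) :=
        (mul_le_mul_of_nonneg_right hle (Real.exp_pos _).le).trans_eq (by ring)
    _ ≤ 1 / 2 * (2 * A) + k / 2 * (4 * A / k) := by gcongr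
    _ = 3 * A := by field_simp; ring

end ExpConv

theorem norm_sub_I_mul_le (a b : ℂ) : ‖b - Complex.I * a‖ ≤ ‖b‖ + ‖a‖ := by
  simpa only [norm_mul, Complex.norm_I, one_mul] using norm_sub_le b (Complex.I * a)

theorem norm_add_I_mul_le (a b : ℂ) : ‖b + Complex.I * a‖ ≤ ‖b‖ + ‖a‖ := by
  simpa only [norm_mul, Complex.norm_I, one_mul] using norm_add_le b (Complex.I * a)

/-- The `n`-th Fourier mode of the Helmholtz potential on the half plane:
for data decaying like `M e^{-ηy}` with `0 < η < α/2`, the explicit potential `φ`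
is `C¹` and satisfies `|φ(y)| e^{ηy} ≤ cM/n` and `|φ'(y)| e^{ηy} ≤ cM`,
with `c` depending only on `α` and `η`. -/
theorem stmt_16 (α η : ℝ) (hα : 0 < α) (hη : 0 < η) (hηα : η < α / 2) :
    ∃ c : ℝ, 0 < c ∧
      ∀ M : ℝ, 0 ≤ M → ∀ n : ℕ, 1 ≤ n →
        ∀ ux uy : ℝ → ℂ, ContinuousOn ux (Ici 0) → ContinuousOn uy (Ici 0) →
          (∀ y ∈ Ici (0:ℝ), ‖ux y‖ ≤ M * Real.exp (-η * y)) →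
          (∀ y ∈ Ici (0:ℝ), ‖uy y‖ ≤ M * Real.exp (-η * y)) →
          ∀ φ : ℝ → ℂ,
            (∀ y : ℝ, φ y =
              (1/2) * (∫ τ in (0:ℝ)..y,
                (uy τ - Complex.I * ux τ) * Complex.exp (((n : ℝ) * α * (τ - y) : ℝ) : ℂ))
              - (1/2) * (∫ τ in Ioi y,
                (uy τ + Complex.I * ux τ) * Complex.exp (((n : ℝ) * α * (y - τ) : ℝ) : ℂ))
              - (1/2) * ∫ τ in Ioi (0:ℝ),
                (uy τ + Complex.I * ux τ) * Complex.exp ((-((n : ℝ) * α * (τ + y)) : ℝ) : ℂ)) →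
            ContDiffOn ℝ 1 φ (Ici 0) ∧
            (∀ y ∈ Ici (0:ℝ), ‖φ y‖ * Real.exp (η * y) ≤ c * M / n) ∧
            (∀ y ∈ Ici (0:ℝ),
              ‖derivWithin φ (Ici 0) y‖ * Real.exp (η * y) ≤ c * M) := by
  refine ⟨6 + 4 / α, by positivity, fun M hM n hn ux uy hux huy hbx hby φ hφ => ?_⟩
  have hn' : (1 : ℝ) ≤ n := by exact_mod_cast hn
  have hηk : 2 * η < n * α := by nlinarith
  set f : ℝ → ℂ := fun τ => uy τ - Complex.I * ux τ
  set g : ℝ → ℂ := fun τ => uy τ + Complex.I * ux τ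
  have hf : ContinuousOn f (Ici 0) := huy.sub (continuousOn_const.mul hux)
  have hg : ContinuousOn g (Ici 0) := huy.add (continuousOn_const.mul hux)
  have hfA : ∀ τ ∈ Ici (0:ℝ), ‖f τ‖ ≤ 2 * M * Real.exp (-η * τ) := fun τ hτ =>
    (norm_sub_I_mul_le _ _).trans (by linarith [hbx τ hτ, hby τ hτ])
  have hgA : ∀ τ ∈ Ici (0:ℝ), ‖g τ‖ ≤ 2 * M * Real.exp (-η * τ) := fun τ hτ =>
    (norm_add_I_mul_le _ _).trans (by linarith [hbx τ hτ, hby τ hτ])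
  obtain rfl : φ = neumannPotential (n * α) f g := funext fun y => by
    rw [hφ y, neumannPotential, ← integral_Ioi_mul_cexp_neg_add]; rfl
  refine ⟨contDiffOn_neumannPotential hf hg hgA (by linarith), fun y hy => ?_, fun y hy => ?_⟩
  · refine (norm_neumannPotential_mul_exp_le hfA hgA hη.le hηk hy).trans ?_
    rw [show 2 * (2 * M) / (n * α) = 4 / α * M / n by field_simp; ring]
    gcongr
    linarith
  · rw [(hasDerivWithinAt_neumannPotential hf hg hgA (by linarith) hy).derivWithin
      (uniqueDiffOn_Ici 0 y hy)]
    refine (norm_neumannPotentialDeriv_mul_exp_le hfA hgA hη.le hηk hy).trans ?_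
    have : 0 ≤ 4 / α * M := by positivity
    linarith
end
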